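/- arXiv:2306.12378 — 8 statements merged into one kernel-verified Lean document; each statement's English description precedes it below -/
import Mathlib

section
/- For f, g ∈ L¹(ℝ), the Hartley–Fourier generalized convolution (f ∗_{H₁,F} g)(x) = (1/(2√(2π))) ∫_ℝ g(y)[f(x+y) + f(x−y) + i f(−x−y) − i f(−x+y)] dy belongs to L¹(ℝ) and satisfies ‖f ∗_{H₁,F} g‖_{L¹(ℝ)} ≤ √(2/π) ‖f‖_{L¹(ℝ)} ‖g‖_{L¹(ℝ)}. -/
/-
Substituting `y ↦ -y` in the terms containing `f (x + y)` and `f (-x + y)` expresses the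
generalized convolution through two ordinary convolutions `k₁ = ǧ ⋆ f` and `k₂ = g ⋆ f`
(with `ǧ y = g (-y)`): almost everywhere it equals
`c * (k₁ x + k₂ x + I * k₂ (-x) - I * k₁ (-x))` with `c = 1 / (2 √(2π))`.
Reflection preserves `L¹` norms and Young's inequality gives `‖kᵢ‖₁ ≤ ‖f‖₁ ‖g‖₁`, so the
`L¹` norm is at most `4 c ‖f‖₁ ‖g‖₁ = √(2/π) ‖f‖₁ ‖g‖₁`.
-/

open MeasureTheory Real Complex Filter Topology

noncomputable def HFconv (f g : ℝ → ℂ) (x : ℝ) : ℂ :=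
  (1 / (2 * Real.sqrt (2 * Real.pi))) *
    ∫ y : ℝ, g y * (f (x + y) + f (x - y) + Complex.I * f (-x - y) - Complex.I * f (-x + y))

open scoped Convolution
open ContinuousLinearMap (mul)

section Convolution

variable {G 𝕜 : Type*} [RCLike 𝕜] [MeasurableSpace G] [AddGroup G] [MeasurableNeg G]
  {μ : Measure G} {u v : G → 𝕜}

theorem integral_norm_convolution_mul_le [MeasurableAdd₂ G] [SFinite μ] [μ.IsAddRightInvariant]
    (hu : Integrable u μ) (hv : Integrable v μ) :
    ∫ x, ‖(u ⋆[mul 𝕜 𝕜, μ] v) x‖ ∂μ ≤ (∫ x, ‖u x‖ ∂μ) * ∫ x, ‖v x‖ ∂μ := by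
  have h_pointwise (x : G) :
      ‖(u ⋆[mul 𝕜 𝕜, μ] v) x‖ ≤ ((fun x ↦ ‖u x‖) ⋆[mul ℝ ℝ, μ] fun x ↦ ‖v x‖) x := by
    simpa only [convolution_def, ContinuousLinearMap.mul_apply', norm_mul]
      using norm_integral_le_integral_norm (μ := μ) fun t ↦ u t * v (x - t)
  calc ∫ x, ‖(u ⋆[mul 𝕜 𝕜, μ] v) x‖ ∂μ
      ≤ ∫ x, ((fun x ↦ ‖u x‖) ⋆[mul ℝ ℝ, μ] fun x ↦ ‖v x‖) x ∂μ :=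
        integral_mono (hu.integrable_convolution _ hv).norm
          (hu.norm.integrable_convolution _ hv.norm) h_pointwise
    _ = (∫ x, ‖u x‖ ∂μ) * ∫ x, ‖v x‖ ∂μ := by
        rw [integral_convolution (mul ℝ ℝ) hu.norm hv.norm, ContinuousLinearMap.mul_apply']

theorem integral_mul_comp_add_eq_convolution [μ.IsNegInvariant] (u v : G → 𝕜) (x : G) :
    ∫ y, u y * v (x + y) ∂μ = ((fun y ↦ u (-y)) ⋆[mul 𝕜 𝕜, μ] v) x := by
  rw [convolution_def, ← integral_neg_eq_self]
  simp only [ContinuousLinearMap.mul_apply', sub_eq_add_neg]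

variable [MeasurableAdd₂ G] [SFinite μ] [μ.IsAddRightInvariant]

theorem MeasureTheory.Integrable.ae_integrable_mul_comp_sub (hu : Integrable u μ)
    (hv : Integrable v μ) : ∀ᵐ x ∂μ, Integrable (fun y ↦ u y * v (x - y)) μ := by
  simpa only [ConvolutionExistsAt, ContinuousLinearMap.mul_apply']
    using hu.ae_convolution_exists (mul 𝕜 𝕜) hv

theorem MeasureTheory.Integrable.ae_integrable_mul_comp_add [μ.IsNegInvariant]
    (hu : Integrable u μ) (hv : Integrable v μ) :
    ∀ᵐ x ∂μ, Integrable (fun y ↦ u y * v (x + y)) μ := by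
  filter_upwards [hu.comp_neg.ae_integrable_mul_comp_sub hv] with x hx
  simpa only [neg_neg, sub_neg_eq_add] using hx.comp_neg

end Convolution

def hartleyFourierCombination {G : Type*} [Neg G] (φ ψ : G → ℂ) (x : G) : ℂ :=
  φ x + ψ x + I * ψ (-x) - I * φ (-x)

section Combination

variable {G : Type*} [AddGroup G]

theorem norm_hartleyFourierCombination_le (φ ψ : G → ℂ) (x : G) :
    ‖hartleyFourierCombination φ ψ x‖ ≤ ‖φ x‖ + ‖ψ x‖ + ‖ψ (-x)‖ + ‖φ (-x)‖ :=
  calc ‖hartleyFourierCombination φ ψ x‖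
      ≤ ‖φ x + ψ x + I * ψ (-x)‖ + ‖I * φ (-x)‖ := norm_sub_le _ _
    _ ≤ ‖φ x‖ + ‖ψ x‖ + ‖I * ψ (-x)‖ + ‖I * φ (-x)‖ := by gcongr; exact norm_add₃_le
    _ = ‖φ x‖ + ‖ψ x‖ + ‖ψ (-x)‖ + ‖φ (-x)‖ := by simp only [norm_mul, norm_I, one_mul]

variable [MeasurableSpace G] [MeasurableNeg G] {μ : Measure G} [μ.IsNegInvariant] {φ ψ : G → ℂ}

theorem MeasureTheory.Integrable.hartleyFourierCombination (hφ : Integrable φ μ)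
    (hψ : Integrable ψ μ) : Integrable (hartleyFourierCombination φ ψ) μ :=
  ((hφ.add hψ).add (hψ.comp_neg.const_mul I)).sub (hφ.comp_neg.const_mul I)

theorem integral_norm_hartleyFourierCombination_le (hφ : Integrable φ μ) (hψ : Integrable ψ μ) :
    ∫ x, ‖hartleyFourierCombination φ ψ x‖ ∂μ ≤ 2 * ((∫ x, ‖φ x‖ ∂μ) + ∫ x, ‖ψ x‖ ∂μ) :=
  calc ∫ x, ‖hartleyFourierCombination φ ψ x‖ ∂μ
      ≤ ∫ x, (‖φ x‖ + ‖ψ x‖ + ‖ψ (-x)‖ + ‖φ (-x)‖) ∂μ :=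
        integral_mono (hφ.hartleyFourierCombination hψ).norm
          (((hφ.norm.add hψ.norm).add hψ.norm.comp_neg).add hφ.norm.comp_neg)
          (norm_hartleyFourierCombination_le φ ψ)
    _ = 2 * ((∫ x, ‖φ x‖ ∂μ) + ∫ x, ‖ψ x‖ ∂μ) := by
        rw [integral_add ((hφ.norm.fun_add hψ.norm).fun_add hψ.norm.comp_neg) hφ.norm.comp_neg,
          integral_add (hφ.norm.fun_add hψ.norm) hψ.norm.comp_neg, integral_add hφ.norm hψ.norm,
          integral_neg_eq_self (‖φ ·‖), integral_neg_eq_self (‖ψ ·‖)]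
        ring

end Combination

theorem HFconv_ae_eq_hartleyFourierCombination {f g : ℝ → ℂ} (hf : Integrable f)
    (hg : Integrable g) :
    HFconv f g =ᵐ[volume] fun x ↦ (1 / (2 * Real.sqrt (2 * Real.pi)) : ℂ) *
      hartleyFourierCombination ((fun y ↦ g (-y)) ⋆[mul ℂ ℂ] f) (g ⋆[mul ℂ ℂ] f) x := by
  have h_neg := (Measure.measurePreserving_neg (volume : Measure ℝ)).quasiMeasurePreserving
  filter_upwards [hg.ae_integrable_mul_comp_add hf, hg.ae_integrable_mul_comp_sub hf,
    h_neg.ae (hg.ae_integrable_mul_comp_sub hf), h_neg.ae (hg.ae_integrable_mul_comp_add hf)]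
    with x h₁ h₂ h₃ h₄
  have h_split : ∫ y, g y * (f (x + y) + f (x - y) + I * f (-x - y) - I * f (-x + y)) =
      (∫ y, g y * f (x + y)) + (∫ y, g y * f (x - y)) + I * (∫ y, g y * f (-x - y))
        - I * ∫ y, g y * f (-x + y) := by
    rw [← integral_const_mul, ← integral_const_mul, ← integral_add h₁ h₂,
      ← integral_add (h₁.fun_add h₂) (h₃.const_mul I),
      ← integral_sub ((h₁.fun_add h₂).fun_add (h₃.const_mul I)) (h₄.const_mul I)]
    congr 1 with y
    ring
  rw [HFconv, h_split, integral_mul_comp_add_eq_convolution, integral_mul_comp_add_eq_convolution]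
  rfl

theorem four_mul_norm_one_div_two_mul_sqrt_two_mul_pi :
    4 * ‖(1 / (2 * Real.sqrt (2 * Real.pi)) : ℂ)‖ = Real.sqrt (2 / Real.pi) := by
  have h_mul : Real.sqrt (2 * π) * Real.sqrt (2 / π) = 2 := by
    rw [← Real.sqrt_mul (by positivity), show 2 * π * (2 / π) = 2 ^ 2 by field_simp,
      Real.sqrt_sq zero_le_two]
  have : 0 < Real.sqrt (2 * π) := by positivity
  rw [norm_div, norm_one, norm_mul, Complex.norm_ofNat, Complex.norm_real,
    Real.norm_of_nonneg (Real.sqrt_nonneg _)]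
  field_simp
  linarith

theorem stmt0 (f g : ℝ → ℂ) (hf : Integrable f) (hg : Integrable g) :
    Integrable (HFconv f g) ∧
      ∫ x : ℝ, ‖HFconv f g x‖ ≤
        Real.sqrt (2 / Real.pi) * (∫ x : ℝ, ‖f x‖) * (∫ x : ℝ, ‖g x‖) := by
  set c : ℂ := 1 / (2 * Real.sqrt (2 * Real.pi))
  set k₁ := (fun y ↦ g (-y)) ⋆[mul ℂ ℂ] f
  set k₂ := g ⋆[mul ℂ ℂ] f
  have hk₁ : Integrable k₁ := hg.comp_neg.integrable_convolution _ hf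
  have hk₂ : Integrable k₂ := hg.integrable_convolution _ hf
  have h_ae := HFconv_ae_eq_hartleyFourierCombination hf hg
  refine ⟨(integrable_congr h_ae).2 ((hk₁.hartleyFourierCombination hk₂).const_mul c), ?_⟩
  have hk₁_le : ∫ x, ‖k₁ x‖ ≤ (∫ x, ‖g x‖) * ∫ x, ‖f x‖ := by
    simpa only [integral_neg_eq_self (‖g ·‖)]
      using integral_norm_convolution_mul_le hg.comp_neg hf
  calc ∫ x, ‖HFconv f g x‖ = ∫ x, ‖c * hartleyFourierCombination k₁ k₂ x‖ :=
        integral_congr_ae (h_ae.fun_comp norm)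
    _ = ‖c‖ * ∫ x, ‖hartleyFourierCombination k₁ k₂ x‖ := by
        simp only [norm_mul, integral_const_mul]
    _ ≤ ‖c‖ * (2 * ((∫ x, ‖k₁ x‖) + ∫ x, ‖k₂ x‖)) := by
        gcongr
        exact integral_norm_hartleyFourierCombination_le hk₁ hk₂
    _ ≤ ‖c‖ * (2 * ((∫ x, ‖g x‖) * (∫ x, ‖f x‖) + (∫ x, ‖g x‖) * ∫ x, ‖f x‖)) := by
        gcongr ‖c‖ * (2 * ?_)
        exact add_le_add hk₁_le (integral_norm_convolution_mul_le hg hf)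
    _ = Real.sqrt (2 / Real.pi) * (∫ x, ‖f x‖) * ∫ x, ‖g x‖ := by
        rw [← four_mul_norm_one_div_two_mul_sqrt_two_mul_pi]
        ring
end

section
/- Let p, q, r ∈ (1, ∞) satisfy 1/p + 1/q + 1/r = 2. Then for all g ∈ L^p(ℝ), f ∈ L^q(ℝ), h ∈ L^r(ℝ), one has |∫_ℝ (f ∗_{H₁,F} g)(x) · h(x) dx| ≤ √(2/π) ‖g‖_{L^p(ℝ)} ‖f‖_{L^q(ℝ)} ‖h‖_{L^r(ℝ)}. -/
open MeasureTheory Real Complex Filter Topology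

/-! The triangle inequality bounds `‖HFconv f g x‖` by `c ∫ |g y| (|f (x+y)| + |f (x-y)| +
|f (-x-y)| + |f (-x+y)|) dy` with `c = 1 / (2 √(2π))`. After the reflections `x ↦ -x`, `y ↦ -y`,
each of the four resulting terms of `∫ |HFconv f g| |h|` is a trilinear form
`∫∫ F (x + y) G y H x` (with `G`, `H` possibly reflected, which does not change their norms).
Young's inequality bounds it by `‖F‖_q ‖G‖_p ‖H‖_r`; this is Hölder's
inequality on the product space with exponents `1 - 1/r, 1 - 1/p, 1 - 1/q` applied to
`F^q G^p`, `F^q H^r`, `G^p H^r`, each of which integrates to a product of two norms by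
translation invariance. Finally `4 c = √(2/π)`. -/

open Measure
open scoped ENNReal

theorem MeasureTheory.MeasurePreserving.lintegral_comp_of_involutive {α : Type*}
    [MeasurableSpace α] {μ : Measure α} {σ : α → α} (hσ : MeasurePreserving σ μ μ)
    (hinv : Function.Involutive σ) (Φ : α → ℝ≥0∞) :
    ∫⁻ x, Φ (σ x) ∂μ = ∫⁻ x, Φ x ∂μ :=
  hσ.lintegral_comp_emb (MeasurableEquiv.ofInvolutive σ hinv hσ.measurable).measurableEmbedding Φ

theorem MeasureTheory.MeasurePreserving.lintegral_comp_of_aemeasurable {α β : Type*}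
    [MeasurableSpace α] [MeasurableSpace β] {μ : Measure α} {ν : Measure β} {σ : α → β}
    (hσ : MeasurePreserving σ μ ν) {Φ : β → ℝ≥0∞} (hΦ : AEMeasurable Φ ν) :
    ∫⁻ x, Φ (σ x) ∂μ = ∫⁻ y, Φ y ∂ν := by
  rw [← hσ.map_eq] at hΦ ⊢
  exact (lintegral_map' hΦ hσ.aemeasurable).symm

theorem ENNReal.mul_rpow_mul_mul_rpow_mul_mul_rpow (a b c : ℝ≥0∞) {e₀ e₁ e₂ : ℝ}
    (h₀ : 0 ≤ e₀) (h₁ : 0 ≤ e₁) (h₂ : 0 ≤ e₂) :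
    (a * b) ^ e₀ * (a * c) ^ e₁ * (b * c) ^ e₂
      = a ^ (e₀ + e₁) * b ^ (e₀ + e₂) * c ^ (e₁ + e₂) := by
  rw [ENNReal.mul_rpow_of_nonneg _ _ h₀, ENNReal.mul_rpow_of_nonneg _ _ h₁,
    ENNReal.mul_rpow_of_nonneg _ _ h₂, ENNReal.rpow_add_of_nonneg _ _ h₀ h₁,
    ENNReal.rpow_add_of_nonneg _ _ h₀ h₂, ENNReal.rpow_add_of_nonneg _ _ h₁ h₂]
  ring

theorem lintegral_rpow_mul_rpow_mul_rpow_le {α : Type*} [MeasurableSpace α] {μ : Measure α}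
    {k₀ k₁ k₂ : α → ℝ≥0∞} (hk₀ : AEMeasurable k₀ μ) (hk₁ : AEMeasurable k₁ μ)
    (hk₂ : AEMeasurable k₂ μ) {e₀ e₁ e₂ : ℝ} (h₀ : 0 ≤ e₀) (h₁ : 0 ≤ e₁) (h₂ : 0 ≤ e₂)
    (he : e₀ + e₁ + e₂ = 1) :
    ∫⁻ a, k₀ a ^ e₀ * k₁ a ^ e₁ * k₂ a ^ e₂ ∂μ ≤
      (∫⁻ a, k₀ a ∂μ) ^ e₀ * (∫⁻ a, k₁ a ∂μ) ^ e₁ * (∫⁻ a, k₂ a ∂μ) ^ e₂ := by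
  simpa [Fin.prod_univ_three] using ENNReal.lintegral_prod_norm_pow_le Finset.univ
    (f := ![k₀, k₁, k₂]) (p := ![e₀, e₁, e₂])
    (by simp [Fin.forall_fin_succ, hk₀, hk₁, hk₂]) (by simpa [Fin.sum_univ_three] using he)
    (by simp [Fin.forall_fin_succ, h₀, h₁, h₂])

section Young

variable {G : Type*} [MeasurableSpace G] [AddCommGroup G] [MeasurableAdd₂ G]
  {μ : Measure G} [SFinite μ] [μ.IsAddLeftInvariant]

theorem AEMeasurable.comp_add_prod {F : G → ℝ≥0∞} (hF : AEMeasurable F μ) :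
    AEMeasurable (fun z : G × G => F (z.1 + z.2)) (μ.prod μ) :=
  (hF.comp_quasiMeasurePreserving quasiMeasurePreserving_fst).comp_quasiMeasurePreserving
    (measurePreserving_add_prod μ μ).quasiMeasurePreserving

theorem lintegral_prod_comp_add_mul_snd {Φ Ψ : G → ℝ≥0∞} (hΦ : AEMeasurable Φ μ)
    (hΨ : AEMeasurable Ψ μ) :
    ∫⁻ z, Φ (z.1 + z.2) * Ψ z.2 ∂μ.prod μ = (∫⁻ x, Φ x ∂μ) * ∫⁻ y, Ψ y ∂μ := by
  rw [← lintegral_prod_mul hΦ hΨ]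
  exact (measurePreserving_add_prod μ μ).lintegral_comp_of_aemeasurable
    (Φ := fun w => Φ w.1 * Ψ w.2) (by fun_prop)

theorem lintegral_prod_comp_add_mul_fst {Φ Ψ : G → ℝ≥0∞} (hΦ : AEMeasurable Φ μ)
    (hΨ : AEMeasurable Ψ μ) :
    ∫⁻ z, Φ (z.1 + z.2) * Ψ z.1 ∂μ.prod μ = (∫⁻ x, Φ x ∂μ) * ∫⁻ y, Ψ y ∂μ := by
  rw [mul_comm, ← lintegral_prod_mul hΨ hΦ]
  simp_rw [mul_comm (Φ _)]
  exact (measurePreserving_prod_add μ μ).lintegral_comp_of_aemeasurable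
    (Φ := fun w => Ψ w.1 * Φ w.2) (by fun_prop)

/-- Young's convolution inequality in trilinear form. -/
theorem lintegral_prod_comp_add_mul_mul_le {p q r : ℝ} (hp : 1 ≤ p) (hq : 1 ≤ q) (hr : 1 ≤ r)
    (hpqr : 1 / p + 1 / q + 1 / r = 2) {f g h : G → ℝ≥0∞} (hf : AEMeasurable f μ)
    (hg : AEMeasurable g μ) (hh : AEMeasurable h μ) :
    ∫⁻ z, f (z.1 + z.2) * g z.2 * h z.1 ∂μ.prod μ ≤
      eLpNorm' f q μ * eLpNorm' g p μ * eLpNorm' h r μ := by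
  have hp₁ : 1 / p ≤ 1 := by rw [div_le_one (by positivity)]; exact hp
  have hq₁ : 1 / q ≤ 1 := by rw [div_le_one (by positivity)]; exact hq
  have hr₁ : 1 / r ≤ 1 := by rw [div_le_one (by positivity)]; exact hr
  have split : ∀ X Y Z : ℝ≥0∞, (X * Y) ^ (1 - 1 / r) * (X * Z) ^ (1 - 1 / p) *
      (Y * Z) ^ (1 - 1 / q) = X ^ (1 / q) * Y ^ (1 / p) * Z ^ (1 / r) := by
    intro X Y Z
    rw [ENNReal.mul_rpow_mul_mul_rpow_mul_mul_rpow _ _ _ (by linarith) (by linarith)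
      (by linarith)]
    congr 3 <;> linarith
  have hfz := hf.comp_add_prod (μ := μ)
  have holder := lintegral_rpow_mul_rpow_mul_rpow_le (μ := μ.prod μ)
    (k₀ := fun z => f (z.1 + z.2) ^ q * g z.2 ^ p) (k₁ := fun z => f (z.1 + z.2) ^ q * h z.1 ^ r)
    (k₂ := fun z => g z.2 ^ p * h z.1 ^ r) (by fun_prop) (by fun_prop) (by fun_prop)
    (e₀ := 1 - 1 / r) (e₁ := 1 - 1 / p) (e₂ := 1 - 1 / q) (by linarith) (by linarith)
    (by linarith) (by linarith)
  calc ∫⁻ z, f (z.1 + z.2) * g z.2 * h z.1 ∂μ.prod μ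
      = ∫⁻ z, (f (z.1 + z.2) ^ q * g z.2 ^ p) ^ (1 - 1 / r) *
          (f (z.1 + z.2) ^ q * h z.1 ^ r) ^ (1 - 1 / p) *
          (g z.2 ^ p * h z.1 ^ r) ^ (1 - 1 / q) ∂μ.prod μ := by
        refine lintegral_congr fun z => ?_
        rw [split, one_div, one_div, one_div, ENNReal.rpow_rpow_inv (by positivity),
          ENNReal.rpow_rpow_inv (by positivity), ENNReal.rpow_rpow_inv (by positivity)]
    _ ≤ _ := holder
    _ = eLpNorm' f q μ * eLpNorm' g p μ * eLpNorm' h r μ := by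
      rw [lintegral_prod_comp_add_mul_snd (Φ := (f · ^ q)) (Ψ := (g · ^ p)) (by fun_prop)
          (by fun_prop),
        lintegral_prod_comp_add_mul_fst (Φ := (f · ^ q)) (Ψ := (h · ^ r)) (by fun_prop)
          (by fun_prop)]
      simp_rw [mul_comm (g _ ^ p)]
      rw [lintegral_prod_mul (f := (h · ^ r)) (g := (g · ^ p)) (by fun_prop) (by fun_prop),
        mul_comm (∫⁻ _, h _ ^ r ∂μ), split]
      simp [eLpNorm']

theorem lintegral_prod_comp_add_mul_mul_le_of_involutive {p q r : ℝ} (hp : 1 ≤ p)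
    (hq : 1 ≤ q) (hr : 1 ≤ r) (hpqr : 1 / p + 1 / q + 1 / r = 2) {f g h : G → ℝ≥0∞}
    (hf : AEMeasurable f μ) (hg : AEMeasurable g μ) (hh : AEMeasurable h μ) {σ τ : G → G}
    (hσ : MeasurePreserving σ μ μ) (hσ' : Function.Involutive σ) (hτ : MeasurePreserving τ μ μ)
    (hτ' : Function.Involutive τ) :
    ∫⁻ z, f (σ z.1 + τ z.2) * g z.2 * h z.1 ∂μ.prod μ ≤
      eLpNorm' f q μ * eLpNorm' g p μ * eLpNorm' h r μ := by
  have eLpNorm'_comp {k : G → ℝ≥0∞} {ρ : G → G} (hρ : MeasurePreserving ρ μ μ)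
      (hρ' : Function.Involutive ρ) (s : ℝ) : eLpNorm' (k ∘ ρ) s μ = eLpNorm' k s μ := by
    simp only [eLpNorm', Function.comp_apply]
    rw [hρ.lintegral_comp_of_involutive hρ' (‖k ·‖ₑ ^ s)]
  rw [← (hσ.prod hτ).lintegral_comp_of_involutive (hσ'.prodMap hτ'),
    ← eLpNorm'_comp (k := g) hτ hτ', ← eLpNorm'_comp (k := h) hσ hσ']
  simp only [Prod.map_fst, Prod.map_snd, hσ' _, hτ' _]
  exact lintegral_prod_comp_add_mul_mul_le hp hq hr hpqr hf
    (hg.comp_quasiMeasurePreserving hτ.quasiMeasurePreserving)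
    (hh.comp_quasiMeasurePreserving hσ.quasiMeasurePreserving)

theorem lintegral_lintegral_reflections_mul_le [MeasurableNeg G] [μ.IsNegInvariant] {p q r : ℝ}
    (hp : 1 ≤ p) (hq : 1 ≤ q) (hr : 1 ≤ r) (hpqr : 1 / p + 1 / q + 1 / r = 2)
    {f g h : G → ℝ≥0∞} (hf : AEMeasurable f μ) (hg : AEMeasurable g μ) (hh : AEMeasurable h μ) :
    ∫⁻ x, ∫⁻ y, g y * (f (x + y) + f (x - y) + f (-x - y) + f (-x + y)) * h x ∂μ ∂μ ≤
      4 * (eLpNorm' f q μ * eLpNorm' g p μ * eLpNorm' h r μ) := by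
  have term {σ τ : G → G} (hσ : MeasurePreserving σ μ μ) (hσ' : Function.Involutive σ)
      (hτ : MeasurePreserving τ μ μ) (hτ' : Function.Involutive τ) :
      AEMeasurable (fun z => f (σ z.1 + τ z.2) * g z.2 * h z.1) (μ.prod μ) ∧
        ∫⁻ z, f (σ z.1 + τ z.2) * g z.2 * h z.1 ∂μ.prod μ ≤
          eLpNorm' f q μ * eLpNorm' g p μ * eLpNorm' h r μ := by
    refine ⟨?_, lintegral_prod_comp_add_mul_mul_le_of_involutive hp hq hr hpqr hf hg hh
      hσ hσ' hτ hτ'⟩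
    have := hf.comp_add_prod.comp_quasiMeasurePreserving (hσ.prod hτ).quasiMeasurePreserving
    exact (this.mul (hg.comp_quasiMeasurePreserving quasiMeasurePreserving_snd)).mul
      (hh.comp_quasiMeasurePreserving quasiMeasurePreserving_fst)
  have hid := MeasurePreserving.id μ
  have hneg := measurePreserving_neg μ
  obtain ⟨m₁, I₁⟩ := term hid (fun _ => rfl) hid (fun _ => rfl)
  obtain ⟨m₂, I₂⟩ := term hid (fun _ => rfl) hneg neg_involutive
  obtain ⟨m₃, I₃⟩ := term hneg neg_involutive hneg neg_involutive
  obtain ⟨m₄, I₄⟩ := term hneg neg_involutive hid (fun _ => rfl)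
  have expand : ∀ x y : G,
      g y * (f (x + y) + f (x - y) + f (-x - y) + f (-x + y)) * h x =
        f (id x + id y) * g y * h x + (f (id x + -y) * g y * h x +
          (f (-x + -y) * g y * h x + f (-x + id y) * g y * h x)) := by
    intro x y
    simp only [id, sub_eq_add_neg]
    ring
  simp_rw [expand]
  rw [← lintegral_prod _ (m₁.fun_add (m₂.fun_add (m₃.fun_add m₄))), lintegral_add_left' m₁,
    lintegral_add_left' m₂, lintegral_add_left' m₃]
  exact (add_le_add I₁ (add_le_add I₂ (add_le_add I₃ I₄))).trans_eq (by ring)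

end Young

theorem Complex.enorm_add_add_I_mul_sub_I_mul_le (a b c d : ℂ) :
    ‖a + b + I * c - I * d‖ₑ ≤ ‖a‖ₑ + ‖b‖ₑ + ‖c‖ₑ + ‖d‖ₑ := by
  calc ‖a + b + I * c - I * d‖ₑ ≤ ‖a‖ₑ + ‖b‖ₑ + ‖I * c‖ₑ + ‖I * d‖ₑ := by
        grw [enorm_sub_le, enorm_add_le, enorm_add_le]
    _ = ‖a‖ₑ + ‖b‖ₑ + ‖c‖ₑ + ‖d‖ₑ := by simp [← ofReal_norm]

theorem enorm_HFconv_le (f g : ℝ → ℂ) (x : ℝ) :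
    ‖HFconv f g x‖ₑ ≤ ENNReal.ofReal (1 / (2 * √(2 * π))) *
      ∫⁻ y, ‖g y‖ₑ * (‖f (x + y)‖ₑ + ‖f (x - y)‖ₑ + ‖f (-x - y)‖ₑ + ‖f (-x + y)‖ₑ) := by
  rw [HFconv, enorm_mul]
  gcongr
  · rw [← ofReal_norm]
    simp [abs_of_nonneg]
  · refine (enorm_integral_le_lintegral_enorm _).trans (lintegral_mono fun y => ?_)
    rw [enorm_mul]
    gcongr
    exact Complex.enorm_add_add_I_mul_sub_I_mul_le _ _ _ _

theorem lintegral_enorm_HFconv_mul_le {p q r : ℝ} (hp : 1 ≤ p) (hq : 1 ≤ q) (hr : 1 ≤ r)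
    (hpqr : 1 / p + 1 / q + 1 / r = 2) {f g h : ℝ → ℂ} (hf : AEStronglyMeasurable f)
    (hg : AEStronglyMeasurable g) (hh : AEStronglyMeasurable h) :
    ∫⁻ x, ‖HFconv f g x‖ₑ * ‖h x‖ₑ ≤
      ENNReal.ofReal √(2 / π) *
        (eLpNorm' f q volume * eLpNorm' g p volume * eLpNorm' h r volume) := by
  set c := ENNReal.ofReal (1 / (2 * √(2 * π)))
  have hc : c * 4 = ENNReal.ofReal √(2 / π) := by
    rw [← ENNReal.ofReal_ofNat 4, ← ENNReal.ofReal_mul (by positivity)]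
    congr 1
    have h2 : √2 * √2 = 2 := mul_self_sqrt zero_le_two
    rw [sqrt_div zero_le_two, sqrt_mul zero_le_two]
    field_simp
    linear_combination -2 * h2
  calc ∫⁻ x, ‖HFconv f g x‖ₑ * ‖h x‖ₑ
      ≤ ∫⁻ x, c * ((∫⁻ y, ‖g y‖ₑ *
          (‖f (x + y)‖ₑ + ‖f (x - y)‖ₑ + ‖f (-x - y)‖ₑ + ‖f (-x + y)‖ₑ)) * ‖h x‖ₑ) :=
        lintegral_mono fun x => by rw [← mul_assoc]; gcongr; exact enorm_HFconv_le f g x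
    _ ≤ c * ∫⁻ x, ∫⁻ y, ‖g y‖ₑ *
          (‖f (x + y)‖ₑ + ‖f (x - y)‖ₑ + ‖f (-x - y)‖ₑ + ‖f (-x + y)‖ₑ) * ‖h x‖ₑ := by
        rw [lintegral_const_mul' _ _ ENNReal.ofReal_ne_top]
        gcongr with x
        exact lintegral_mul_const_le _ _
    _ ≤ c * (4 * (eLpNorm' (‖f ·‖ₑ) q volume * eLpNorm' (‖g ·‖ₑ) p volume *
          eLpNorm' (‖h ·‖ₑ) r volume)) := by
        gcongr
        exact lintegral_lintegral_reflections_mul_le hp hq hr hpqr hf.enorm hg.enorm hh.enorm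
    _ = _ := by simp only [eLpNorm'_enorm]; rw [← mul_assoc, hc]

theorem stmt1 (p q r : ℝ) (hp : 1 < p) (hq : 1 < q) (hr : 1 < r)
    (hpqr : 1 / p + 1 / q + 1 / r = 2)
    (f g h : ℝ → ℂ)
    (hg : MemLp g (ENNReal.ofReal p)) (hf : MemLp f (ENNReal.ofReal q))
    (hh : MemLp h (ENNReal.ofReal r)) :
    ‖∫ x : ℝ, HFconv f g x * h x‖ ≤
      Real.sqrt (2 / Real.pi) * (eLpNorm g (ENNReal.ofReal p) volume).toReal *
        (eLpNorm f (ENNReal.ofReal q) volume).toReal *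
        (eLpNorm h (ENNReal.ofReal r) volume).toReal := by
  have eLpNorm_ofReal {s : ℝ} (hs : 1 < s) (u : ℝ → ℂ) :
      eLpNorm u (ENNReal.ofReal s) volume = eLpNorm' u s volume := by
    rw [eLpNorm_eq_eLpNorm' (by simp; linarith) ENNReal.ofReal_ne_top,
      ENNReal.toReal_ofReal (by linarith)]
  have hg' := hg.eLpNorm_ne_top
  have hf' := hf.eLpNorm_ne_top
  have hh' := hh.eLpNorm_ne_top
  rw [eLpNorm_ofReal hp] at hg' ⊢
  rw [eLpNorm_ofReal hq] at hf' ⊢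
  rw [eLpNorm_ofReal hr] at hh' ⊢
  refine (norm_integral_le_lintegral_norm _).trans ?_
  simp_rw [ofReal_norm, enorm_mul]
  refine (ENNReal.toReal_mono (by finiteness) (lintegral_enorm_HFconv_mul_le hp.le hq.le hr.le
    hpqr hf.1 hg.1 hh.1)).trans_eq ?_
  simp only [ENNReal.toReal_mul, ENNReal.toReal_ofReal (sqrt_nonneg _)]
  ring
end

section
/- Let p, q, r > 1 be real numbers with 1/p + 1/q = 1 + 1/r. If g ∈ L^p(ℝ) and f ∈ L^q(ℝ), then the Hartley–Fourier generalized convolution f ∗_{H₁,F} g is well-defined, belongs to L^r(ℝ), and satisfies ‖f ∗_{H₁,F} g‖_{L^r(ℝ)} ≤ √(2/π) ‖g‖_{L^p(ℝ)} ‖f‖_{L^q(ℝ)}. -/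
open MeasureTheory Real Complex Filter Topology

/-!
Bound the integrand pointwise: `|f ∗_{H₁,F} g (x)|` is at most `1 / (2√(2π))` times the sum of the
four nonnegative correlations `∫ |g y| |f (±x ± y)| dy`. Each of them is, after the reflection
`x ↦ -x` and possibly `f ↦ f ∘ neg` (both isometric in `L^r` and `L^q`), the correlation
`x ↦ ∫ |g y| |f (x + y)| dy`, whose `L^r` norm is at most `‖g‖_p ‖f‖_q` by Young's inequality.
Minkowski's inequality gives the factor `4`, and `4 / (2√(2π)) = √(2/π)`.
-/

open scoped ENNReal

namespace ENNReal

variable {α : Type*} [MeasurableSpace α] {μ : Measure α}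

theorem lintegral_mul_mul_rpow_le {f g h : α → ℝ≥0∞} (hf : AEMeasurable f μ)
    (hg : AEMeasurable g μ) (hh : AEMeasurable h μ) {a b c : ℝ} (ha : 0 ≤ a) (hb : 0 ≤ b)
    (hc : 0 ≤ c) (habc : a + b + c = 1) :
    ∫⁻ x, f x ^ a * g x ^ b * h x ^ c ∂μ ≤
      (∫⁻ x, f x ∂μ) ^ a * (∫⁻ x, g x ∂μ) ^ b * (∫⁻ x, h x ∂μ) ^ c := by
  have := lintegral_prod_norm_pow_le (μ := μ) Finset.univ (f := ![f, g, h]) (p := ![a, b, c])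
    (by intro i _; fin_cases i <;> assumption) (by simpa [Fin.sum_univ_three] using habc)
    (by intro i _; fin_cases i <;> assumption)
  simpa [Fin.prod_univ_three] using this

theorem rpow_rpow_mul_rpow_rpow_of_add_eq_one_div {s u v : ℝ} (hs : s ≠ 0) (hu : 0 ≤ u)
    (hv : 0 ≤ v) (huv : u + v = 1 / s) (t : ℝ≥0∞) : (t ^ s) ^ u * (t ^ s) ^ v = t := by
  rw [← rpow_add_of_nonneg _ _ hu hv, huv, ← rpow_mul, mul_one_div_cancel hs, rpow_one]

/-- Three-factor Hölder applied to
`g f = (g ^ p f ^ q) ^ (1 / r) (g ^ p) ^ (1 - 1 / q) (f ^ q) ^ (1 - 1 / p)`. -/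
theorem lintegral_mul_le_of_young_exponents {f g : α → ℝ≥0∞} (hf : AEMeasurable f μ)
    (hg : AEMeasurable g μ) {p q r : ℝ} (hp : 1 ≤ p) (hq : 1 ≤ q) (hr : 0 < r)
    (hpqr : 1 / p + 1 / q = 1 + 1 / r) :
    ∫⁻ x, g x * f x ∂μ ≤ (∫⁻ x, g x ^ p * f x ^ q ∂μ) ^ (1 / r) *
      (∫⁻ x, g x ^ p ∂μ) ^ (1 - 1 / q) * (∫⁻ x, f x ^ q ∂μ) ^ (1 - 1 / p) := by
  have hp' : 1 / p ≤ 1 := div_le_one_of_le₀ hp (by linarith)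
  have hq' : 1 / q ≤ 1 := div_le_one_of_le₀ hq (by linarith)
  have hr' : 0 ≤ 1 / r := by positivity
  calc ∫⁻ x, g x * f x ∂μ
      = ∫⁻ x, (g x ^ p * f x ^ q) ^ (1 / r) * (g x ^ p) ^ (1 - 1 / q) *
          (f x ^ q) ^ (1 - 1 / p) ∂μ := by
        refine lintegral_congr fun x => ?_
        rw [mul_rpow_of_nonneg _ _ hr', mul_right_comm _ (_ ^ (1 / r)), mul_assoc,
          rpow_rpow_mul_rpow_rpow_of_add_eq_one_div (by linarith) hr' (by linarith) (by linarith),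
          rpow_rpow_mul_rpow_rpow_of_add_eq_one_div (by linarith) hr' (by linarith) (by linarith)]
    _ ≤ _ := lintegral_mul_mul_rpow_le ((hg.pow_const p).mul (hf.pow_const q)) (hg.pow_const p)
        (hf.pow_const q) hr' (by linarith) (by linarith) (by linarith)

end ENNReal

section Reflection

variable {G : Type*} [MeasurableSpace G] [InvolutiveNeg G] [MeasurableNeg G] {μ : Measure G}
  [μ.IsNegInvariant]

theorem eLpNorm'_comp_neg {ε : Type*} [ENorm ε] (F : G → ε) (r : ℝ) :
    eLpNorm' (fun x => F (-x)) r μ = eLpNorm' F r μ := by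
  simp only [eLpNorm'_eq_lintegral_enorm]
  rw [lintegral_neg_eq_self (fun x => ‖F x‖ₑ ^ r)]

end Reflection

section Young

variable {G : Type*} [MeasurableSpace G] [AddCommGroup G] [MeasurableAdd₂ G] {μ : Measure G}
  [SFinite μ]

theorem measurable_lintegral_mul_add {f g : G → ℝ≥0∞} (hf : Measurable f) (hg : Measurable g) :
    Measurable fun x => ∫⁻ y, g y * f (x + y) ∂μ :=
  ((hg.comp measurable_snd).mul (hf.comp measurable_add)).lintegral_prod_right'

variable [μ.IsAddLeftInvariant]

theorem lintegral_lintegral_mul_add {f g : G → ℝ≥0∞} (hf : Measurable f) (hg : Measurable g) :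
    ∫⁻ x, ∫⁻ y, g y * f (x + y) ∂μ ∂μ = (∫⁻ y, g y ∂μ) * ∫⁻ x, f x ∂μ := by
  rw [lintegral_lintegral_swap ((hg.comp measurable_snd).mul (hf.comp measurable_add)).aemeasurable]
  calc ∫⁻ y, ∫⁻ x, g y * f (x + y) ∂μ ∂μ = ∫⁻ y, g y * ∫⁻ x, f x ∂μ ∂μ := by
        refine lintegral_congr fun y => ?_
        rw [lintegral_const_mul (f := fun x => f (x + y)) _ (hf.comp (measurable_add_const y)),
          lintegral_add_right_eq_self f y]
    _ = (∫⁻ y, g y ∂μ) * ∫⁻ x, f x ∂μ := lintegral_mul_const _ hg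

theorem eLpNorm'_lintegral_mul_add_le {f g : G → ℝ≥0∞} (hf : Measurable f) (hg : Measurable g)
    {p q r : ℝ} (hp : 1 ≤ p) (hq : 1 ≤ q) (hr : 0 < r) (hpqr : 1 / p + 1 / q = 1 + 1 / r) :
    eLpNorm' (fun x => ∫⁻ y, g y * f (x + y) ∂μ) r μ ≤ eLpNorm' g p μ * eLpNorm' f q μ := by
  simp only [eLpNorm'_eq_lintegral_enorm, enorm_eq_self]
  set IG := ∫⁻ y, g y ^ p ∂μ
  set IF := ∫⁻ x, f x ^ q ∂μ
  set C := IG ^ (1 - 1 / q) * IF ^ (1 - 1 / p)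
  have hr' : 0 ≤ 1 / r := by positivity
  have hpointwise (x : G) :
      (∫⁻ y, g y * f (x + y) ∂μ) ^ r ≤ (∫⁻ y, g y ^ p * f (x + y) ^ q ∂μ) * C ^ r := by
    have holder := ENNReal.lintegral_mul_le_of_young_exponents (μ := μ) (f := fun y => f (x + y))
      (hf.comp (measurable_const_add x)).aemeasurable hg.aemeasurable hp hq hr hpqr
    rw [lintegral_add_left_eq_self (fun t => f t ^ q) x, mul_assoc] at holder
    calc (∫⁻ y, g y * f (x + y) ∂μ) ^ r
        ≤ ((∫⁻ y, g y ^ p * f (x + y) ^ q ∂μ) ^ (1 / r) * C) ^ r :=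
          ENNReal.rpow_le_rpow holder hr.le
      _ = (∫⁻ y, g y ^ p * f (x + y) ^ q ∂μ) * C ^ r := by
          rw [ENNReal.mul_rpow_of_nonneg _ _ hr.le, ← ENNReal.rpow_mul, one_div_mul_cancel hr.ne',
            ENNReal.rpow_one]
  calc (∫⁻ x, (∫⁻ y, g y * f (x + y) ∂μ) ^ r ∂μ) ^ (1 / r)
      ≤ (∫⁻ x, (∫⁻ y, g y ^ p * f (x + y) ^ q ∂μ) * C ^ r ∂μ) ^ (1 / r) := by
        gcongr with x
        exact hpointwise x
    _ = (IG * IF * C ^ r) ^ (1 / r) := by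
        rw [lintegral_mul_const _ (measurable_lintegral_mul_add (hf.pow_const q) (hg.pow_const p)),
          lintegral_lintegral_mul_add (hf.pow_const q) (hg.pow_const p)]
    _ = (IG ^ (1 / r) * IG ^ (1 - 1 / q)) * (IF ^ (1 / r) * IF ^ (1 - 1 / p)) := by
        rw [ENNReal.mul_rpow_of_nonneg _ _ hr', ENNReal.mul_rpow_of_nonneg _ _ hr',
          ← ENNReal.rpow_mul, mul_one_div_cancel hr.ne', ENNReal.rpow_one]
        ring
    _ = IG ^ (1 / p) * IF ^ (1 / q) := by
        have hp' : 1 / p ≤ 1 := div_le_one_of_le₀ hp (by linarith)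
        have hq' : 1 / q ≤ 1 := div_le_one_of_le₀ hq (by linarith)
        rw [← ENNReal.rpow_add_of_nonneg _ _ hr' (by linarith),
          ← ENNReal.rpow_add_of_nonneg _ _ hr' (by linarith)]
        congr 2 <;> linarith

variable [MeasurableNeg G] [μ.IsNegInvariant]

theorem eLpNorm'_lintegral_mul_four_le {f g : G → ℝ≥0∞} (hf : Measurable f) (hg : Measurable g)
    {p q r : ℝ} (hp : 1 ≤ p) (hq : 1 ≤ q) (hr : 0 < r) (hpqr : 1 / p + 1 / q = 1 + 1 / r) :
    eLpNorm' (fun x => ∫⁻ y, g y * (f (x + y) + f (x - y) + f (-x - y) + f (-x + y)) ∂μ) r μ ≤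
      4 * (eLpNorm' g p μ * eLpNorm' f q μ) := by
  have hr1 : 1 ≤ r := by
    have hp' : 1 / p ≤ 1 := div_le_one_of_le₀ hp (by linarith)
    have hq' : 1 / q ≤ 1 := div_le_one_of_le₀ hq (by linarith)
    rw [← div_le_one hr]
    linarith
  set f' : G → ℝ≥0∞ := fun t => f (-t)
  have hf' : Measurable f' := hf.comp measurable_neg
  set K : G → ℝ≥0∞ := fun x => ∫⁻ y, g y * f (x + y) ∂μ
  set K' : G → ℝ≥0∞ := fun x => ∫⁻ y, g y * f' (x + y) ∂μ
  have hK : Measurable K := measurable_lintegral_mul_add hf hg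
  have hK' : Measurable K' := measurable_lintegral_mul_add hf' hg
  have hshift {h : G → ℝ≥0∞} (hh : Measurable h) (c : G) : Measurable fun y => g y * h (c + y) :=
    hg.mul (hh.comp (measurable_const_add c))
  have hsplit : (fun x => ∫⁻ y, g y * (f (x + y) + f (x - y) + f (-x - y) + f (-x + y)) ∂μ) =
      K + (fun x => K' (-x)) + K' + fun x => K (-x) := by
    funext x
    calc ∫⁻ y, g y * (f (x + y) + f (x - y) + f (-x - y) + f (-x + y)) ∂μ
        = ∫⁻ y, g y * f (x + y) + g y * f' (-x + y) + g y * f' (x + y) + g y * f (-x + y) ∂μ := by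
          refine lintegral_congr fun y => ?_
          have e₁ : -(-x + y) = x - y := by abel
          have e₂ : -(x + y) = -x - y := by abel
          simp only [f', e₁, e₂]
          ring
      _ = K x + K' (-x) + K' x + K (-x) := by
          rw [lintegral_add_right _ (hshift hf (-x)), lintegral_add_right _ (hshift hf' x),
            lintegral_add_right _ (hshift hf' (-x))]
  have hYoung : eLpNorm' K r μ ≤ eLpNorm' g p μ * eLpNorm' f q μ :=
    eLpNorm'_lintegral_mul_add_le hf hg hp hq hr hpqr
  have hYoung' : eLpNorm' K' r μ ≤ eLpNorm' g p μ * eLpNorm' f q μ := by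
    have := eLpNorm'_lintegral_mul_add_le (μ := μ) hf' hg hp hq hr hpqr
    rwa [show eLpNorm' f' q μ = eLpNorm' f q μ from eLpNorm'_comp_neg f q] at this
  have hKn : Measurable fun x => K (-x) := hK.comp measurable_neg
  have hKn' : Measurable fun x => K' (-x) := hK'.comp measurable_neg
  rw [hsplit]
  calc eLpNorm' (K + (fun x => K' (-x)) + K' + fun x => K (-x)) r μ
      ≤ eLpNorm' K r μ + eLpNorm' (fun x => K' (-x)) r μ + eLpNorm' K' r μ +
          eLpNorm' (fun x => K (-x)) r μ := by
        refine (eLpNorm'_add_le ((hK.add hKn').add hK').aestronglyMeasurable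
          hKn.aestronglyMeasurable hr1).trans (add_le_add_left ?_ _)
        refine (eLpNorm'_add_le (hK.add hKn').aestronglyMeasurable
          hK'.aestronglyMeasurable hr1).trans (add_le_add_left ?_ _)
        exact eLpNorm'_add_le hK.aestronglyMeasurable hKn'.aestronglyMeasurable hr1
    _ = 2 * eLpNorm' K r μ + 2 * eLpNorm' K' r μ := by
        rw [eLpNorm'_comp_neg, eLpNorm'_comp_neg]
        ring
    _ ≤ 2 * (eLpNorm' g p μ * eLpNorm' f q μ) + 2 * (eLpNorm' g p μ * eLpNorm' f q μ) := by
        gcongr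
    _ = 4 * (eLpNorm' g p μ * eLpNorm' f q μ) := by ring

end Young

theorem eLpNorm_ofReal_eq_eLpNorm' {α ε : Type*} [MeasurableSpace α] [ENorm ε] {μ : Measure α}
    {p : ℝ} (hp : 0 < p) (f : α → ε) : eLpNorm f (ENNReal.ofReal p) μ = eLpNorm' f p μ := by
  rw [eLpNorm_eq_eLpNorm' (ENNReal.ofReal_pos.2 hp).ne' ENNReal.ofReal_ne_top,
    ENNReal.toReal_ofReal hp.le]

section HartleyFourier

theorem HFconv_congr_ae {f f₀ g g₀ : ℝ → ℂ} (hf : f =ᵐ[volume] f₀) (hg : g =ᵐ[volume] g₀) :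
    HFconv f g = HFconv f₀ g₀ := by
  have hadd (c : ℝ) : ∀ᵐ y, f (c + y) = f₀ (c + y) :=
    (measurePreserving_add_left volume c).quasiMeasurePreserving.ae_eq_comp hf
  have hsub (c : ℝ) : ∀ᵐ y, f (c - y) = f₀ (c - y) :=
    (Measure.measurePreserving_sub_left volume c).quasiMeasurePreserving.ae_eq_comp hf
  funext x
  unfold HFconv
  congr 1
  refine integral_congr_ae ?_
  filter_upwards [hg, hadd x, hsub x, hsub (-x), hadd (-x)] with y h₀ h₁ h₂ h₃ h₄
  rw [h₀, h₁, h₂, h₃, h₄]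

theorem stronglyMeasurable_HFconv {f g : ℝ → ℂ} (hf : StronglyMeasurable f)
    (hg : StronglyMeasurable g) : StronglyMeasurable (HFconv f g) := by
  have := hf.measurable
  have := hg.measurable
  have hΦ : StronglyMeasurable fun z : ℝ × ℝ => g z.2 * (f (z.1 + z.2) + f (z.1 - z.2) +
      I * f (-z.1 - z.2) - I * f (-z.1 + z.2)) :=
    Measurable.stronglyMeasurable (by fun_prop)
  exact hΦ.integral_prod_right'.const_mul _

theorem HFconv_eq_smul (f g : ℝ → ℂ) :
    HFconv f g = (1 / (2 * (√(2 * π) : ℂ))) • fun x =>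
      ∫ y, g y * (f (x + y) + f (x - y) + I * f (-x - y) - I * f (-x + y)) :=
  rfl

theorem enorm_integral_HF_le (f g : ℝ → ℂ) (x : ℝ) :
    ‖∫ y, g y * (f (x + y) + f (x - y) + I * f (-x - y) - I * f (-x + y))‖ₑ ≤
      ∫⁻ y, ‖g y‖ₑ * (‖f (x + y)‖ₑ + ‖f (x - y)‖ₑ + ‖f (-x - y)‖ₑ + ‖f (-x + y)‖ₑ) := by
  refine (enorm_integral_le_lintegral_enorm _).trans (lintegral_mono fun y => ?_)
  rw [enorm_mul]
  gcongr
  calc ‖f (x + y) + f (x - y) + I * f (-x - y) - I * f (-x + y)‖ₑ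
      ≤ ‖f (x + y)‖ₑ + ‖f (x - y)‖ₑ + ‖I * f (-x - y)‖ₑ + ‖I * f (-x + y)‖ₑ := by
        grw [enorm_sub_le, enorm_add_le, enorm_add_le]
    _ = ‖f (x + y)‖ₑ + ‖f (x - y)‖ₑ + ‖f (-x - y)‖ₑ + ‖f (-x + y)‖ₑ := by
        rw [enorm_mul, enorm_mul, show ‖I‖ₑ = 1 by simp [enorm_eq_nnnorm], one_mul, one_mul]

theorem enorm_HF_constant_mul_four :
    ‖(1 / (2 * (√(2 * π) : ℂ)))‖ₑ * 4 = ENNReal.ofReal √(2 / π) := by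
  have hsqrt : √(2 / π) * √(2 * π) = 2 := by
    rw [← Real.sqrt_mul (by positivity), show 2 / π * (2 * π) = 2 ^ 2 by field_simp,
      Real.sqrt_sq zero_le_two]
  have hnorm : ‖(1 / (2 * (√(2 * π) : ℂ)))‖ = 1 / (2 * √(2 * π)) := by
    rw [← Complex.ofReal_ofNat, ← Complex.ofReal_mul, ← Complex.ofReal_one, ← Complex.ofReal_div,
      Complex.norm_real, Real.norm_of_nonneg (by positivity)]
  rw [← ofReal_norm, hnorm, ← ENNReal.ofReal_ofNat 4, ← ENNReal.ofReal_mul (by positivity)]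
  congr 1
  have : 0 < √(2 * π) := by positivity
  field_simp
  linarith

end HartleyFourier

theorem stmt2 (p q r : ℝ) (hp : 1 < p) (hq : 1 < q) (hr : 1 < r)
    (hpqr : 1 / p + 1 / q = 1 + 1 / r)
    (f g : ℝ → ℂ)
    (hg : MemLp g (ENNReal.ofReal p)) (hf : MemLp f (ENNReal.ofReal q)) :
    MemLp (HFconv f g) (ENNReal.ofReal r) ∧
      eLpNorm (HFconv f g) (ENNReal.ofReal r) volume ≤
        ENNReal.ofReal (Real.sqrt (2 / Real.pi)) *
          eLpNorm g (ENNReal.ofReal p) volume * eLpNorm f (ENNReal.ofReal q) volume := by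
  obtain ⟨f₀, hf₀, hff₀⟩ := hf.1
  obtain ⟨g₀, hg₀, hgg₀⟩ := hg.1
  have hconv : HFconv f g = HFconv f₀ g₀ := HFconv_congr_ae hff₀ hgg₀
  have hbound : eLpNorm (HFconv f g) (ENNReal.ofReal r) volume ≤
      ENNReal.ofReal √(2 / π) *
        eLpNorm g (ENNReal.ofReal p) volume * eLpNorm f (ENNReal.ofReal q) volume := by
    rw [hconv, HFconv_eq_smul, eLpNorm_const_smul, eLpNorm_congr_ae hff₀, eLpNorm_congr_ae hgg₀,
      eLpNorm_ofReal_eq_eLpNorm' (by linarith), eLpNorm_ofReal_eq_eLpNorm' (by linarith),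
      eLpNorm_ofReal_eq_eLpNorm' (by linarith), ← eLpNorm'_enorm (f := f₀),
      ← eLpNorm'_enorm (f := g₀), ← enorm_HF_constant_mul_four, mul_assoc, mul_assoc]
    gcongr
    refine (eLpNorm'_mono_enorm_ae (by linarith)
      (Eventually.of_forall fun x => (enorm_integral_HF_le f₀ g₀ x).trans_eq
        (enorm_eq_self _).symm)).trans ?_
    exact eLpNorm'_lintegral_mul_four_le hf₀.measurable.enorm hg₀.measurable.enorm hp.le hq.le
      (by linarith) hpqr
  refine ⟨⟨hconv ▸ (stronglyMeasurable_HFconv hf₀ hg₀).aestronglyMeasurable, ?_⟩, hbound⟩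
  exact hbound.trans_lt (ENNReal.mul_lt_top (ENNReal.mul_lt_top ENNReal.ofReal_lt_top hg.2) hf.2)
end

section
/- Let p, q > 1 with 1/p + 1/q = 1. If g ∈ L^p(ℝ) and f ∈ L^q(ℝ), then the Hartley–Fourier generalized convolution (f ∗_{H₁,F} g)(x) is defined and bounded for every x ∈ ℝ, with sup_{x∈ℝ} |(f ∗_{H₁,F} g)(x)| ≤ √(2/π) ‖g‖_{L^p(ℝ)} ‖f‖_{L^q(ℝ)}. -/
open MeasureTheory Real Complex Filter Topology

/-!
The integrand is `g` times a kernel built from four translates and reflections of `f`. Lebesgue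
measure is invariant under `y ↦ x ± y`, so each of them has the same `L^q` norm as `f` and the
kernel has `L^q` norm at most `4 ‖f‖_q`. Hölder's inequality then makes the integrand integrable
with integral at most `4 ‖g‖_p ‖f‖_q`, and `4 / (2 √(2π)) = √(2/π)`.
-/

open scoped ENNReal

theorem Real.two_div_sqrt_two_mul_pi : 2 / √(2 * π) = √(2 / π) := by
  rw [div_eq_iff (by positivity), ← Real.sqrt_mul (by positivity),
    show 2 / π * (2 * π) = 2 ^ 2 by field_simp, Real.sqrt_sq zero_le_two]

namespace MeasureTheory

theorem norm_integral_mul_le_eLpNorm_mul_eLpNorm {α 𝕜 : Type*} {m : MeasurableSpace α}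
    {μ : Measure α} [NormedRing 𝕜] [NormedSpace ℝ 𝕜] {p q : ℝ≥0∞} [p.HolderTriple q 1]
    {f g : α → 𝕜} (hf : MemLp f p μ) (hg : MemLp g q μ) :
    ‖∫ a, f a * g a ∂μ‖ ≤ (eLpNorm f p μ).toReal * (eLpNorm g q μ).toReal := by
  have hfg : MemLp (f * g) 1 μ := hg.mul hf
  calc ‖∫ a, f a * g a ∂μ‖ ≤ ∫ a, ‖f a * g a‖ ∂μ := norm_integral_le_integral_norm _
    _ = (eLpNorm (f * g) 1 μ).toReal := by
      rw [toReal_eLpNorm hfg.1, lpNorm_one_eq_integral_norm hfg.1]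
      rfl
    _ ≤ (eLpNorm f p μ * eLpNorm g q μ).toReal := by
      have := eLpNorm_smul_le_mul_eLpNorm (μ := μ) (p := p) (q := q) (r := 1) hg.1 hf.1
      exact ENNReal.toReal_mono (ENNReal.mul_ne_top hf.eLpNorm_ne_top hg.eLpNorm_ne_top) this
    _ = _ := ENNReal.toReal_mul

section HartleyFourierKernel

variable {G : Type*} [MeasurableSpace G] [AddGroup G] [MeasurableAdd G] {μ : Measure G}
  [μ.IsAddLeftInvariant] {p : ℝ≥0∞} {f : G → ℂ}

def hartleyFourierKernel (f : G → ℂ) (x y : G) : ℂ :=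
  f (x + y) + f (x - y) + I * f (-x - y) - I * f (-x + y)

theorem MemLp.comp_add_left (hf : MemLp f p μ) (x : G) : MemLp (fun y => f (x + y)) p μ :=
  hf.comp_measurePreserving (measurePreserving_add_left μ x)

variable [MeasurableNeg G] [μ.IsNegInvariant]

theorem MemLp.comp_sub_left (hf : MemLp f p μ) (x : G) : MemLp (fun y => f (x - y)) p μ :=
  hf.comp_measurePreserving (Measure.measurePreserving_sub_left μ x)

theorem MemLp.hartleyFourierKernel (hf : MemLp f p μ) (x : G) :
    MemLp (hartleyFourierKernel f x) p μ :=
  (((hf.comp_add_left x).add (hf.comp_sub_left x)).add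
    ((hf.comp_sub_left (-x)).const_mul I)).sub ((hf.comp_add_left (-x)).const_mul I)

theorem eLpNorm_hartleyFourierKernel_le (hf : MemLp f p μ) (hp : 1 ≤ p) (x : G) :
    eLpNorm (hartleyFourierKernel f x) p μ ≤ 4 * eLpNorm f p μ := by
  have add_eq (z : G) : eLpNorm (fun y => f (z + y)) p μ = eLpNorm f p μ :=
    eLpNorm_comp_measurePreserving hf.1 (measurePreserving_add_left μ z)
  have sub_eq (z : G) : eLpNorm (fun y => f (z - y)) p μ = eLpNorm f p μ :=
    eLpNorm_comp_measurePreserving hf.1 (Measure.measurePreserving_sub_left μ z)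
  have I_mul_eq (h : G → ℂ) : eLpNorm (fun y => I * h y) p μ = eLpNorm h p μ := by
    change eLpNorm (I • h) p μ = _
    simpa [enorm_eq_nnnorm] using eLpNorm_const_smul I h p μ
  calc eLpNorm (hartleyFourierKernel f x) p μ
      ≤ eLpNorm (fun y => f (x + y)) p μ + eLpNorm (fun y => f (x - y)) p μ
        + eLpNorm (fun y => I * f (-x - y)) p μ + eLpNorm (fun y => I * f (-x + y)) p μ := by
        refine (eLpNorm_sub_le (((hf.comp_add_left x).add (hf.comp_sub_left x)).add
          ((hf.comp_sub_left (-x)).const_mul I)).1 ((hf.comp_add_left (-x)).const_mul I).1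
          hp).trans ?_
        gcongr
        refine (eLpNorm_add_le ((hf.comp_add_left x).add (hf.comp_sub_left x)).1
          ((hf.comp_sub_left (-x)).const_mul I).1 hp).trans ?_
        gcongr
        exact eLpNorm_add_le (hf.comp_add_left x).1 (hf.comp_sub_left x).1 hp
    _ = 4 * eLpNorm f p μ := by
        rw [I_mul_eq, I_mul_eq, add_eq, sub_eq, sub_eq, add_eq]
        ring

end HartleyFourierKernel

end MeasureTheory

theorem stmt3_general (p q : ℝ) (hp : 1 < p) (hpq : 1 / p + 1 / q = 1)
    (f g : ℝ → ℂ)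
    (hg : MemLp g (ENNReal.ofReal p)) (hf : MemLp f (ENNReal.ofReal q)) :
    (∀ x : ℝ, Integrable (fun y : ℝ =>
        g y * (f (x + y) + f (x - y) + Complex.I * f (-x - y) - Complex.I * f (-x + y)))) ∧
      ∀ x : ℝ, ‖HFconv f g x‖ ≤
        Real.sqrt (2 / Real.pi) * (eLpNorm g (ENNReal.ofReal p) volume).toReal *
          (eLpNorm f (ENNReal.ofReal q) volume).toReal := by
  have : (ENNReal.ofReal p).HolderConjugate (ENNReal.ofReal q) :=
    (Real.holderConjugate_iff.mpr ⟨hp, by simpa using hpq⟩).ennrealOfReal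
  refine ⟨fun x => hg.integrable_mul (hf.hartleyFourierKernel x), fun x => ?_⟩
  have kernel_le : (eLpNorm (hartleyFourierKernel f x) (ENNReal.ofReal q)).toReal
      ≤ 4 * (eLpNorm f (ENNReal.ofReal q)).toReal := by
    simpa using ENNReal.toReal_mono (by finiteness)
      (eLpNorm_hartleyFourierKernel_le hf (ENNReal.HolderConjugate.one_le _ (ENNReal.ofReal p)) x)
  calc ‖HFconv f g x‖
      = (2 * √(2 * π))⁻¹ * ‖∫ y, g y * hartleyFourierKernel f x y‖ := by
        simp [HFconv, hartleyFourierKernel, abs_of_nonneg (Real.sqrt_nonneg _)]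
    _ ≤ (2 * √(2 * π))⁻¹ * ((eLpNorm g (ENNReal.ofReal p)).toReal
          * (4 * (eLpNorm f (ENNReal.ofReal q)).toReal)) := by
        gcongr
        exact (norm_integral_mul_le_eLpNorm_mul_eLpNorm hg (hf.hartleyFourierKernel x)).trans
          (by gcongr)
    _ = _ := by
        rw [← Real.two_div_sqrt_two_mul_pi]
        ring

theorem stmt3 (p q : ℝ) (hp : 1 < p) (hq : 1 < q) (hpq : 1 / p + 1 / q = 1)
    (f g : ℝ → ℂ)
    (hg : MemLp g (ENNReal.ofReal p)) (hf : MemLp f (ENNReal.ofReal q)) :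
    (∀ x : ℝ, Integrable (fun y : ℝ =>
        g y * (f (x + y) + f (x - y) + Complex.I * f (-x - y) - Complex.I * f (-x + y)))) ∧
      ∀ x : ℝ, ‖HFconv f g x‖ ≤
        Real.sqrt (2 / Real.pi) * (eLpNorm g (ENNReal.ofReal p) volume).toReal *
          (eLpNorm f (ENNReal.ofReal q) volume).toReal :=
  stmt3_general p q hp hpq f g hg hf
end

section
/- For f, g ∈ L¹(ℝ), the Hartley transform of their Hartley–Fourier generalized convolution factorizes as H₁(f ∗_{H₁,F} g)(y) = (H₁ f)(y) · (F g)(y) for all y ∈ ℝ, where F is the Fourier transform. -/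
open MeasureTheory Real Complex Filter Topology

noncomputable def hartley (f : ℝ → ℂ) (y : ℝ) : ℂ :=
  (1 / Real.sqrt (2 * Real.pi)) *
    ∫ x : ℝ, f x * ((Real.cos (x * y) + Real.sin (x * y) : ℝ) : ℂ)

noncomputable def fourierT (f : ℝ → ℂ) (y : ℝ) : ℂ :=
  (1 / Real.sqrt (2 * Real.pi)) *
    ∫ x : ℝ, Complex.exp (-Complex.I * x * y) * f x

/-! The generalized convolution kernel `K_f(x, t) = f(x+t) + f(x-t) + i f(-x-t) - i f(-x+t)` moves
from `f` to the test function: translating and reflecting in each of the four terms gives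
`∫ K_f(x, t) w(x) dx = ∫ f(u) K_w(u, t) du`. For `w = Cas(· y)` the addition formulas give
`K_w(u, t) = 2 e^{-ity} Cas(uy)`, so after Fubini (justified because shears preserve Lebesgue
measure on `ℝ²`) the Hartley transform of `f ∗ g` factors as `H₁ f · F g`. -/

section ShearIntegrable

variable {G L : Type*} [AddGroup G] [MeasurableSpace G] [MeasurableAdd₂ G]
  [NormedRing L] {μ ν : Measure G} [SFinite μ] [SFinite ν] [μ.IsAddRightInvariant]
  {f g : G → L}

theorem integrable_comp_add_mul_prod (hf : Integrable f μ) (hg : Integrable g ν) :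
    Integrable (fun p : G × G => f (p.1 + p.2) * g p.2) (μ.prod ν) :=
  (measurePreserving_add_prod μ ν).integrable_comp_of_integrable (hf.mul_prod hg)

theorem integrable_comp_sub_mul_prod [MeasurableNeg G] (hf : Integrable f μ)
    (hg : Integrable g ν) :
    Integrable (fun p : G × G => f (p.1 - p.2) * g p.2) (μ.prod ν) :=
  (measurePreserving_sub_prod μ ν).integrable_comp_of_integrable (hf.mul_prod hg)

end ShearIntegrable

theorem integral_add_add_I_mul_sub_I_mul {α : Type*} [MeasurableSpace α] {μ : Measure α}
    {a b c d : α → ℂ} (ha : Integrable a μ) (hb : Integrable b μ) (hc : Integrable c μ)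
    (hd : Integrable d μ) :
    ∫ x, (a x + b x + I * c x - I * d x) ∂μ
      = ∫ x, a x ∂μ + ∫ x, b x ∂μ + I * ∫ x, c x ∂μ - I * ∫ x, d x ∂μ := by
  rw [integral_sub, integral_add, integral_add, integral_const_mul, integral_const_mul]
  all_goals fun_prop

section Kernel

variable {G : Type*} [AddCommGroup G] [MeasurableSpace G] [MeasurableAdd G]
  {μ : Measure G} [μ.IsAddRightInvariant]

theorem integral_comp_add_mul (f w : G → ℂ) (t : G) :
    ∫ x, f (x + t) * w x ∂μ = ∫ u, f u * w (u - t) ∂μ := by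
  simpa using integral_add_right_eq_self (μ := μ) (fun u => f u * w (u - t)) t

theorem integral_comp_sub_mul (f w : G → ℂ) (t : G) :
    ∫ x, f (x - t) * w x ∂μ = ∫ u, f u * w (u + t) ∂μ := by
  simpa using integral_sub_right_eq_self (μ := μ) (fun u => f u * w (u + t)) t

variable [MeasurableNeg G] [μ.IsNegInvariant]

theorem integral_comp_neg_sub_mul (f w : G → ℂ) (t : G) :
    ∫ x, f (-x - t) * w x ∂μ = ∫ u, f u * w (-u - t) ∂μ := by
  conv_rhs => rw [← integral_neg_eq_self, ← integral_add_right_eq_self _ t]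
  congr with x
  abel_nf

theorem integral_comp_neg_add_mul (f w : G → ℂ) (t : G) :
    ∫ x, f (-x + t) * w x ∂μ = ∫ u, f u * w (-u + t) ∂μ := by
  conv_rhs => rw [← integral_neg_eq_self, ← integral_sub_right_eq_self _ t]
  congr with x
  abel_nf

/-- `HFconv f g x = (2 √(2π))⁻¹ ∫ g t * hfKernel f x t dt`. -/
noncomputable def hfKernel (f : G → ℂ) (x t : G) : ℂ :=
  f (x + t) + f (x - t) + I * f (-x - t) - I * f (-x + t)

theorem integral_hfKernel_mul {f w : G → ℂ} {C : ℝ} (hf : Integrable f μ) (hw : Measurable w)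
    (hC : ∀ x, ‖w x‖ ≤ C) (t : G) :
    ∫ x, hfKernel f x t * w x ∂μ = ∫ u, f u * hfKernel w u t ∂μ := by
  have mul_w : ∀ {F : G → ℂ} {φ : G → G}, Integrable F μ → Measurable φ →
      Integrable (fun x => F x * w (φ x)) μ := fun hF hφ =>
    hF.mul_bdd (hw.comp hφ).aestronglyMeasurable (Eventually.of_forall fun _ => hC _)
  have hf_neg_sub : Integrable (fun x => f (-x - t)) μ := by
    convert hf.comp_neg.comp_add_right t using 3; abel
  have hf_neg_add : Integrable (fun x => f (-x + t)) μ := by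
    convert hf.comp_neg.comp_sub_right t using 3; abel
  calc ∫ x, hfKernel f x t * w x ∂μ
      = ∫ x, (f (x + t) * w x + f (x - t) * w x + I * (f (-x - t) * w x)
          - I * (f (-x + t) * w x)) ∂μ := by
        congr with x; simp only [hfKernel]; ring
    _ = ∫ u, (f u * w (u - t) + f u * w (u + t) + I * (f u * w (-u - t))
          - I * (f u * w (-u + t))) ∂μ := by
        rw [integral_add_add_I_mul_sub_I_mul, integral_add_add_I_mul_sub_I_mul,
          integral_comp_add_mul, integral_comp_sub_mul, integral_comp_neg_sub_mul,
          integral_comp_neg_add_mul]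
        exacts [mul_w hf (by fun_prop), mul_w hf (by fun_prop), mul_w hf (by fun_prop),
          mul_w hf (by fun_prop), mul_w (φ := id) (hf.comp_add_right t) measurable_id,
          mul_w (φ := id) (hf.comp_sub_right t) measurable_id,
          mul_w (φ := id) hf_neg_sub measurable_id, mul_w (φ := id) hf_neg_add measurable_id]
    _ = ∫ u, f u * hfKernel w u t ∂μ := by
        congr with u; simp only [hfKernel]; ring

end Kernel

theorem integrable_mul_hfKernel_prod {G : Type*} [AddCommGroup G] [MeasurableSpace G]
    [MeasurableAdd₂ G] [MeasurableNeg G] {μ : Measure G} [SFinite μ] [μ.IsAddRightInvariant]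
    [μ.IsNegInvariant] {f g : G → ℂ} (hf : Integrable f μ) (hg : Integrable g μ) :
    Integrable (fun p : G × G => g p.2 * hfKernel f p.1 p.2) (μ.prod μ) := by
  have h₁ := integrable_comp_add_mul_prod hf hg
  have h₂ := integrable_comp_sub_mul_prod hf hg
  have h₃ := integrable_comp_add_mul_prod hf.comp_neg hg
  have h₄ := integrable_comp_sub_mul_prod hf.comp_neg hg
  refine (((h₁.add h₂).add (h₃.const_mul I)).sub (h₄.const_mul I)).congr
    (Eventually.of_forall fun p => ?_)
  simp only [hfKernel, Pi.add_apply, Pi.sub_apply, neg_add', neg_sub', sub_neg_eq_add]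
  ring

noncomputable def casKernel (y x : ℝ) : ℂ := ((Real.cos (x * y) + Real.sin (x * y) : ℝ) : ℂ)

theorem continuous_casKernel (y : ℝ) : Continuous (casKernel y) := by
  unfold casKernel; fun_prop

theorem norm_casKernel_le (y x : ℝ) : ‖casKernel y x‖ ≤ 2 := by
  rw [casKernel, Complex.norm_real, Real.norm_eq_abs]
  exact (abs_add_le _ _).trans
    (by linarith [Real.abs_cos_le_one (x * y), Real.abs_sin_le_one (x * y)])

theorem hfKernel_casKernel (y u t : ℝ) :
    hfKernel (casKernel y) u t = 2 * cexp (-I * t * y) * casKernel y u := by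
  have hexp : cexp (-I * t * y) = Real.cos (t * y) - I * Real.sin (t * y) := by
    rw [show -I * t * y = ((-(t * y) : ℝ) : ℂ) * I by push_cast; ring, exp_mul_I,
      ← ofReal_cos, ← ofReal_sin, Real.cos_neg, Real.sin_neg]
    push_cast; ring
  rw [hexp]
  simp only [hfKernel, casKernel, add_mul, sub_mul, neg_mul, Real.cos_add, Real.sin_add,
    Real.cos_sub, Real.sin_sub, Real.cos_neg, Real.sin_neg]
  push_cast
  ring

theorem integral_hfKernel_mul_casKernel {f : ℝ → ℂ} (hf : Integrable f) (y t : ℝ) :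
    ∫ x, hfKernel f x t * casKernel y x = 2 * cexp (-I * t * y) * ∫ u, f u * casKernel y u := by
  rw [integral_hfKernel_mul hf (continuous_casKernel y).measurable (norm_casKernel_le y),
    ← integral_const_mul]
  congr with u
  rw [hfKernel_casKernel]
  ring

theorem integral_integral_mul_hfKernel_mul_casKernel {f g : ℝ → ℂ} (hf : Integrable f)
    (hg : Integrable g) (y : ℝ) :
    ∫ x, (∫ t, g t * hfKernel f x t) * casKernel y x
      = 2 * (∫ u, f u * casKernel y u) * ∫ t : ℝ, cexp (-I * t * y) * g t := by
  have hint : Integrable (fun p : ℝ × ℝ => g p.2 * hfKernel f p.1 p.2 * casKernel y p.1)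
      (volume.prod volume) :=
    (integrable_mul_hfKernel_prod hf hg).mul_bdd
      ((continuous_casKernel y).comp continuous_fst).aestronglyMeasurable
      (Eventually.of_forall fun p => norm_casKernel_le y p.1)
  calc ∫ x, (∫ t, g t * hfKernel f x t) * casKernel y x
      = ∫ x, ∫ t, g t * hfKernel f x t * casKernel y x := by
        congr with x; exact (integral_mul_const _ _).symm
    _ = ∫ t, ∫ x, g t * hfKernel f x t * casKernel y x := integral_integral_swap hint
    _ = ∫ t, g t * (2 * cexp (-I * t * y) * ∫ u, f u * casKernel y u) := by
        congr with t
        rw [← integral_hfKernel_mul_casKernel hf, ← integral_const_mul]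
        congr with x; ring
    _ = 2 * (∫ u, f u * casKernel y u) * ∫ t : ℝ, cexp (-I * t * y) * g t := by
        rw [← integral_const_mul]
        congr with t; ring

theorem stmt9 (f g : ℝ → ℂ) (hf : Integrable f) (hg : Integrable g) (y : ℝ) :
    hartley (HFconv f g) y = hartley f y * fourierT g y := by
  have hconv : hartley (HFconv f g) y = 1 / (Real.sqrt (2 * π) : ℂ) *
      ∫ x, (1 / (2 * Real.sqrt (2 * π) : ℂ) * ∫ t, g t * hfKernel f x t) * casKernel y x :=
    rfl
  have hf_hartley : hartley f y = 1 / (Real.sqrt (2 * π) : ℂ) * ∫ u, f u * casKernel y u := rfl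
  rw [hconv, hf_hartley, fourierT]
  simp_rw [mul_assoc _ _ (casKernel y _), integral_const_mul,
    integral_integral_mul_hfKernel_mul_casKernel hf hg]
  ring
end

section
/- (Titchmarsh-type theorem) Let f, g be continuous functions on ℝ with ∫_ℝ |f(x)| e^{|x|} dx < ∞ and ∫_ℝ |g(x)| e^{|x|} dx < ∞. Then (f ∗_{H₁,F} g)(x) = 0 for almost every x ∈ ℝ if and only if f = 0 almost everywhere or g = 0 almost everywhere. -/
open MeasureTheory Real Complex Filter Topology

/-!
Write `f̌ x = f (-x)`. The kernel of `HFconv` splits as `A (x + y) + B (x - y)` with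
`A = f + i f̌` and `B = f - i f̌`, so up to a constant `HFconv f g = ǧ ⋆ A + g ⋆ B` almost
everywhere. Taking Fourier transforms, `HFconv f g = 0` a.e. gives
`𝓕g(-ξ) (𝓕f ξ + i 𝓕f(-ξ)) + 𝓕g ξ (𝓕f ξ - i 𝓕f(-ξ)) = 0` for all real `ξ`, and combining this
with the same identity at `-ξ` yields `𝓕f ξ · 𝓕g ξ · 𝓕g(-ξ) = 0`.
The weight `e^{|x|}` makes the Fourier integrals converge, and be holomorphic, on a strip around
the real axis, so `𝓕f` and `𝓕g` are real-analytic on `ℝ`. Analytic functions on a connected set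
have no zero divisors, so one of the three factors vanishes identically, and Fourier inversion
gives `f = 0` or `g = 0`.
-/

open FourierTransform Convolution ContinuousLinearMap

section FourierAlgebra

variable {V E : Type*} [NormedAddCommGroup V] [InnerProductSpace ℝ V] [MeasurableSpace V]
  [BorelSpace V] [FiniteDimensional ℝ V] [NormedAddCommGroup E] [NormedSpace ℂ E]

theorem fourier_comp_neg (f : V → E) (ξ : V) : 𝓕 (fun x ↦ f (-x)) ξ = 𝓕 f (-ξ) := by
  rw [← fourierInv_eq_fourier_comp_neg, fourierInv_eq_fourier_neg]

theorem fourier_add_apply {u v : V → E} (hu : Integrable u) (hv : Integrable v) (ξ : V) :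
    𝓕 (u + v) ξ = 𝓕 u ξ + 𝓕 v ξ := by
  simp only [fourier_eq, Pi.add_apply, smul_add]
  exact integral_add ((fourierIntegral_convergent_iff ξ).2 hu)
    ((fourierIntegral_convergent_iff ξ).2 hv)

theorem fourier_add_const_mul_comp_neg {f : V → ℂ} (hf : Integrable f) (a : ℂ) (ξ : V) :
    𝓕 (fun x ↦ f x + a * f (-x)) ξ = 𝓕 f ξ + a * 𝓕 f (-ξ) := by
  rw [show (fun x ↦ f x + a * f (-x)) = f + fun x ↦ a * f (-x) from rfl,
    fourier_add_apply hf (hf.comp_neg.const_mul a), ← fourier_comp_neg]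
  simp only [fourier_eq, ← integral_const_mul, mul_smul_comm]

end FourierAlgebra

theorem HFconv_ae_eq_convolution {f g : ℝ → ℂ} (hf : Integrable f) (hg : Integrable g) :
    ∀ᵐ x, HFconv f g x = (1 / (2 * √(2 * π))) *
      (((fun y ↦ g (-y)) ⋆[mul ℂ ℂ] fun u ↦ f u + I * f (-u)) x +
        (g ⋆[mul ℂ ℂ] fun u ↦ f u + -I * f (-u)) x) := by
  have hA : Integrable (fun u ↦ f u + I * f (-u)) := hf.add (hf.comp_neg.const_mul I)
  have hB : Integrable (fun u ↦ f u + -I * f (-u)) := hf.add (hf.comp_neg.const_mul (-I))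
  filter_upwards [hg.comp_neg.ae_convolution_exists (mul ℂ ℂ) hA,
    hg.ae_convolution_exists (mul ℂ ℂ) hB] with x hxA hxB
  have hA_eq : ((fun y ↦ g (-y)) ⋆[mul ℂ ℂ] fun u ↦ f u + I * f (-u)) x =
      ∫ y, g y * (f (x + y) + I * f (-(x + y))) := by
    rw [convolution_def, ← integral_neg_eq_self]
    simp [sub_neg_eq_add]
  have hxA' : Integrable (fun y ↦ g y * (f (x + y) + I * f (-(x + y)))) := by
    simpa [ConvolutionExistsAt, sub_neg_eq_add] using hxA.comp_neg
  rw [hA_eq, convolution_def, ← integral_add hxA' hxB, HFconv]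
  congr 2 with y
  simp only [mul_apply']
  ring_nf

theorem fourier_identity_of_HFconv_ae_eq_zero {f g : ℝ → ℂ} (hf : Integrable f)
    (hg : Integrable g) (h : ∀ᵐ x, HFconv f g x = 0) (ξ : ℝ) :
    𝓕 g (-ξ) * (𝓕 f ξ + I * 𝓕 f (-ξ)) + 𝓕 g ξ * (𝓕 f ξ + -I * 𝓕 f (-ξ)) = 0 := by
  set u := (fun y ↦ g (-y)) ⋆[mul ℂ ℂ] fun x ↦ f x + I * f (-x)
  set v := g ⋆[mul ℂ ℂ] fun x ↦ f x + -I * f (-x)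
  have hc : (1 / (2 * √(2 * π)) : ℂ) ≠ 0 := by
    have : √(2 * π) ≠ 0 := by positivity
    simpa using this
  have huv : u + v =ᵐ[volume] 0 := by
    filter_upwards [h, HFconv_ae_eq_convolution hf hg] with x hx hx'
    rw [hx] at hx'
    exact (mul_eq_zero.1 hx'.symm).resolve_left hc
  have hA : Integrable (fun x ↦ f x + I * f (-x)) := hf.add (hf.comp_neg.const_mul I)
  have hB : Integrable (fun x ↦ f x + -I * f (-x)) := hf.add (hf.comp_neg.const_mul (-I))
  have hu : Integrable u := hg.comp_neg.integrable_convolution (mul ℂ ℂ) hA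
  have hv : Integrable v := hg.integrable_convolution (mul ℂ ℂ) hB
  have h0 := fourier_congr_ae huv ξ
  rwa [fourier_add_apply hu hv, Real.fourier_mul_convolution_eq hg.comp_neg hA,
    Real.fourier_mul_convolution_eq hg hB, fourier_comp_neg, fourier_add_const_mul_comp_neg hf,
    fourier_add_const_mul_comp_neg hf, show 𝓕 (0 : ℝ → ℂ) ξ = 0 by simp [fourier_eq]] at h0

theorem fourier_mul_fourier_mul_fourier_neg_eq_zero {f g : ℝ → ℂ} (hf : Integrable f)
    (hg : Integrable g) (h : ∀ᵐ x, HFconv f g x = 0) (ξ : ℝ) :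
    𝓕 f ξ * (𝓕 g ξ * 𝓕 g (-ξ)) = 0 := by
  have h₁ := fourier_identity_of_HFconv_ae_eq_zero hf hg h ξ
  have h₂ := fourier_identity_of_HFconv_ae_eq_zero hf hg h (-ξ)
  rw [neg_neg] at h₂
  -- `h₁ ± i h₂` isolate `𝓕g(-ξ) (𝓕f ξ + i 𝓕f(-ξ)) = 0` and `𝓕g ξ (𝓕f ξ - i 𝓕f(-ξ)) = 0`.
  linear_combination ((𝓕 g ξ + 𝓕 g (-ξ)) * h₁ + I * (𝓕 g ξ - 𝓕 g (-ξ)) * h₂) / 4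
    - (𝓕 g ξ - 𝓕 g (-ξ)) ^ 2 * 𝓕 f ξ / 4 * I_sq

noncomputable def fourierLaplace (f : ℝ → ℂ) (z : ℂ) : ℂ :=
  ∫ x : ℝ, cexp (-2 * π * x * z * I) * f x

theorem fourierLaplace_ofReal (f : ℝ → ℂ) (ξ : ℝ) : fourierLaplace f ξ = 𝓕 f ξ := by
  simp only [fourierLaplace, fourier_real_eq_integral_exp_smul, smul_eq_mul]
  push_cast
  rfl

theorem norm_cexp_fourierLaplace_kernel (x : ℝ) (z : ℂ) :
    ‖cexp (-2 * π * x * z * I)‖ = rexp (2 * π * x * z.im) := by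
  rw [norm_exp]
  congr 1
  simp

theorem isOpen_setOf_abs_im_lt (a : ℝ) : IsOpen {z : ℂ | |z.im| < a} :=
  isOpen_lt (continuous_abs.comp continuous_im) continuous_const

section ExponentialWeight

variable {c : ℝ}

theorem two_pi_mul_mul_im_le {z : ℂ} (hz : |z.im| < c / (4 * π)) (x : ℝ) :
    2 * π * x * z.im ≤ c * |x| / 2 :=
  calc 2 * π * x * z.im ≤ 2 * π * (|x| * |z.im|) := by
        rw [mul_assoc, ← abs_mul]
        exact mul_le_mul_of_nonneg_left (le_abs_self _) (by positivity)
    _ ≤ 2 * π * (|x| * (c / (4 * π))) := by gcongr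
    _ = c * |x| / 2 := by field_simp; ring

theorem abs_le_mul_exp_half (hc : 0 < c) (x : ℝ) : |x| ≤ 2 / c * rexp (c * |x| / 2) := by
  rw [div_mul_eq_mul_div, le_div_iff₀ hc]
  linarith [add_one_le_exp (c * |x| / 2)]

theorem integrable_of_integrable_norm_mul_exp {f : ℝ → ℂ} (hc : 0 ≤ c)
    (hfm : AEStronglyMeasurable f) (hf : Integrable fun x ↦ ‖f x‖ * rexp (c * |x|)) :
    Integrable f :=
  hf.mono' hfm (Eventually.of_forall fun x ↦
    le_mul_of_one_le_right (norm_nonneg _) (one_le_exp (by positivity)))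

theorem hasDerivAt_fourierLaplace {f : ℝ → ℂ} (hc : 0 < c) (hfm : AEStronglyMeasurable f)
    (hf : Integrable fun x ↦ ‖f x‖ * rexp (c * |x|)) {z₀ : ℂ} (hz₀ : |z₀.im| < c / (4 * π)) :
    HasDerivAt (fourierLaplace f)
      (∫ x : ℝ, -2 * π * x * I * cexp (-2 * π * x * z₀ * I) * f x) z₀ := by
  have hker (z : ℂ) : Continuous fun x : ℝ ↦ cexp (-2 * π * x * z * I) := by fun_prop
  refine (hasDerivAt_integral_of_dominated_loc_of_deriv_le ((isOpen_setOf_abs_im_lt _).mem_nhds hz₀)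
    (F := fun z x ↦ cexp (-2 * π * x * z * I) * f x)
    (F' := fun z x ↦ -2 * π * x * I * cexp (-2 * π * x * z * I) * f x)
    (bound := fun x ↦ 4 * π / c * (‖f x‖ * rexp (c * |x|)))
    (Eventually.of_forall fun z ↦ (hker z).aestronglyMeasurable.mul hfm) ?_ ?_ ?_
    (hf.const_mul _) ?_).2
  · refine hf.mono' ((hker z₀).aestronglyMeasurable.mul hfm) (Eventually.of_forall fun x ↦ ?_)
    rw [norm_mul, norm_cexp_fourierLaplace_kernel, mul_comm]
    refine mul_le_mul_of_nonneg_left (exp_le_exp.2 ?_) (norm_nonneg _)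
    linarith [two_pi_mul_mul_im_le hz₀ x, mul_nonneg hc.le (abs_nonneg x)]
  · exact ((by fun_prop : Continuous fun x : ℝ ↦ -2 * π * x * I * cexp (-2 * π * x * z₀ * I))
      ).aestronglyMeasurable.mul hfm
  · refine Eventually.of_forall fun x z hz ↦ ?_
    have hx : ‖(-2 * π * x * I : ℂ)‖ = 2 * π * |x| := by simp [abs_of_pos pi_pos]
    rw [norm_mul, norm_mul, hx, norm_cexp_fourierLaplace_kernel]
    calc 2 * π * |x| * rexp (2 * π * x * z.im) * ‖f x‖
        ≤ 2 * π * (2 / c * rexp (c * |x| / 2)) * rexp (c * |x| / 2) * ‖f x‖ := by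
          gcongr
          · exact abs_le_mul_exp_half hc x
          · exact two_pi_mul_mul_im_le hz x
      _ = 4 * π / c * (‖f x‖ * rexp (c * |x|)) := by
          rw [← add_halves (c * |x|), Real.exp_add, add_halves]; ring
  · refine Eventually.of_forall fun x z _ ↦ ?_
    have := ((((hasDerivAt_id z).const_mul (-2 * π * x : ℂ)).mul_const I).cexp).mul_const (f x)
    simp only [id, mul_one] at this
    exact this.congr_deriv (by ring)

theorem analyticAt_fourier {f : ℝ → ℂ} (hc : 0 < c) (hfm : AEStronglyMeasurable f)
    (hf : Integrable fun x ↦ ‖f x‖ * rexp (c * |x|)) (ξ : ℝ) : AnalyticAt ℝ (𝓕 f) ξ := by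
  have hdiff : DifferentiableOn ℂ (fourierLaplace f) {z : ℂ | |z.im| < c / (4 * π)} :=
    fun z hz ↦ (hasDerivAt_fourierLaplace hc hfm hf hz).differentiableAt.differentiableWithinAt
  have hξ : (ξ : ℂ) ∈ {z : ℂ | |z.im| < c / (4 * π)} := by
    rw [Set.mem_ofPred_eq, ofReal_im, abs_zero]
    positivity
  have := ((hdiff.analyticAt ((isOpen_setOf_abs_im_lt _).mem_nhds hξ)).restrictScalars (𝕜 := ℝ)).comp
    (ofRealCLM.analyticAt ξ)
  convert this using 1
  funext t
  simp [fourierLaplace_ofReal]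

end ExponentialWeight

theorem eq_zero_of_fourier_eq_zero {f : ℝ → ℂ} (hfc : Continuous f) (hf : Integrable f)
    (h : ∀ ξ, 𝓕 f ξ = 0) : f = 0 := by
  have h0 : 𝓕 f = 0 := funext h
  rw [← hfc.fourierInv_fourier_eq hf (by rw [h0]; exact integrable_zero _ _ _), h0]
  ext x
  simp [fourierInv_eq]

theorem eq_zero_or_eq_zero_of_fourier_mul_eq_zero {f g : ℝ → ℂ} {c : ℝ} (hc : 0 < c)
    (hfc : Continuous f) (hgc : Continuous g) (hf : Integrable fun x ↦ ‖f x‖ * rexp (c * |x|))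
    (hg : Integrable fun x ↦ ‖g x‖ * rexp (c * |x|))
    (h : ∀ ξ, 𝓕 f ξ * (𝓕 g ξ * 𝓕 g (-ξ)) = 0) : f = 0 ∨ g = 0 := by
  have hFf : AnalyticOnNhd ℝ (𝓕 f) Set.univ :=
    fun ξ _ ↦ analyticAt_fourier hc hfc.aestronglyMeasurable hf ξ
  have hFg : AnalyticOnNhd ℝ (𝓕 g) Set.univ :=
    fun ξ _ ↦ analyticAt_fourier hc hgc.aestronglyMeasurable hg ξ
  have hFg_neg : AnalyticOnNhd ℝ (fun ξ ↦ 𝓕 g (-ξ)) Set.univ :=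
    fun ξ _ ↦ (hFg (-ξ) trivial).comp analyticAt_id.neg
  rcases hFf.eq_zero_or_eq_zero_of_mul_eq_zero (hFg.mul hFg_neg) (fun ξ _ ↦ h ξ)
    isPreconnected_univ with hf0 | hg0
  · exact .inl <| eq_zero_of_fourier_eq_zero hfc
      (integrable_of_integrable_norm_mul_exp hc.le hfc.aestronglyMeasurable hf)
      fun ξ ↦ hf0 ξ trivial
  · refine .inr <| eq_zero_of_fourier_eq_zero hgc
      (integrable_of_integrable_norm_mul_exp hc.le hgc.aestronglyMeasurable hg) fun ξ ↦ ?_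
    rcases hFg.eq_zero_or_eq_zero_of_mul_eq_zero hFg_neg (fun ξ _ ↦ hg0 ξ trivial)
      isPreconnected_univ with h | h
    · exact h ξ trivial
    · simpa using h (-ξ) trivial

theorem stmt16 (f g : ℝ → ℂ) (hfc : Continuous f) (hgc : Continuous g)
    (hf : Integrable (fun x : ℝ => ‖f x‖ * Real.exp |x|))
    (hg : Integrable (fun x : ℝ => ‖g x‖ * Real.exp |x|)) :
    (∀ᵐ x : ℝ ∂volume, HFconv f g x = 0) ↔
      ((∀ᵐ x : ℝ ∂volume, f x = 0) ∨ (∀ᵐ x : ℝ ∂volume, g x = 0)) := by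
  have hf₁ : Integrable fun x ↦ ‖f x‖ * rexp (1 * |x|) := by simpa only [one_mul] using hf
  have hg₁ : Integrable fun x ↦ ‖g x‖ * rexp (1 * |x|) := by simpa only [one_mul] using hg
  constructor
  · intro h
    have hprod := fourier_mul_fourier_mul_fourier_neg_eq_zero
      (integrable_of_integrable_norm_mul_exp zero_le_one hfc.aestronglyMeasurable hf₁)
      (integrable_of_integrable_norm_mul_exp zero_le_one hgc.aestronglyMeasurable hg₁) h
    rcases eq_zero_or_eq_zero_of_fourier_mul_eq_zero one_pos hfc hgc hf₁ hg₁ hprod with rfl | rfl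
    · exact .inl (ae_of_all _ fun _ ↦ rfl)
    · exact .inr (ae_of_all _ fun _ ↦ rfl)
  · rintro (hf0 | hg0)
    · rw [(hfc.ae_eq_iff_eq volume continuous_const).1 hf0]
      exact ae_of_all _ fun x ↦ by simp [HFconv]
    · rw [(hgc.ae_eq_iff_eq volume continuous_const).1 hg0]
      exact ae_of_all _ fun x ↦ by simp [HFconv]
end

section
/- There is no function U ∈ L¹(ℝ) that acts as a unit for the Hartley–Fourier convolution, i.e. there is no U ∈ L¹(ℝ) with (f ∗_{H₁,F} U) = f for all f ∈ L¹(ℝ). -/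
open MeasureTheory Real Complex Filter Topology

open scoped FourierTransform

/-! Test the putative unit `U` against the modulated Gaussians `x ↦ exp (-x²) e^{-2πixw}`.
For such an `f` the convolution `f ∗ U` is continuous, so `f ∗ U = f` a.e. forces
`(f ∗ U)(0) = f(0) = 1`. On the other hand `(f ∗ U)(0)` is a fixed linear combination of the
Fourier transform of `exp (-y²) U(y)` at `w` and `-w`, which tends to `0` as `w → ∞` by the
Riemann–Lebesgue lemma. -/

section HFconv

variable {f g : ℝ → ℂ}

lemma norm_HFconv_kernel_le {C : ℝ} (hfC : ∀ x, ‖f x‖ ≤ C) (x y : ℝ) :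
    ‖f (x + y) + f (x - y) + I * f (-x - y) - I * f (-x + y)‖ ≤ 4 * C := by
  calc _ ≤ ‖f (x + y)‖ + ‖f (x - y)‖ + ‖I * f (-x - y)‖ + ‖I * f (-x + y)‖ :=
        (norm_sub_le _ _).trans (by gcongr; exact norm_add₃_le)
    _ ≤ C + C + C + C := by
        simp only [norm_mul, norm_I, one_mul]
        gcongr <;> apply hfC
    _ = 4 * C := by ring

lemma continuous_HFconv (hf : Continuous f) {C : ℝ} (hfC : ∀ x, ‖f x‖ ≤ C)
    (hg : Integrable g) : Continuous (HFconv f g) := by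
  refine continuous_const.mul <| continuous_of_dominated (bound := fun y => ‖g y‖ * (4 * C))
    (fun x => hg.aestronglyMeasurable.mul (by fun_prop)) (fun x => ?_) (hg.norm.mul_const _)
    (.of_forall fun y => by fun_prop)
  filter_upwards with y
  rw [norm_mul]
  gcongr
  exact norm_HFconv_kernel_le hfC x y

lemma HFconv_apply_zero :
    HFconv f g 0 = (1 / (2 * Real.sqrt (2 * Real.pi))) *
      ∫ y, g y * ((1 - I) * f y + (1 + I) * f (-y)) := by
  simp only [HFconv, zero_add, zero_sub, neg_zero]
  congr 2 with y
  ring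

end HFconv

noncomputable def gaussWave (w x : ℝ) : ℂ := cexp (-(x : ℂ) ^ 2) * 𝐞 (-(x * w))

lemma norm_gaussWave (w x : ℝ) : ‖gaussWave w x‖ = rexp (-x ^ 2) := by
  rw [gaussWave, norm_mul, Circle.norm_coe, mul_one, ← ofReal_pow, ← ofReal_neg, norm_exp_ofReal]

lemma norm_gaussWave_le_one (w x : ℝ) : ‖gaussWave w x‖ ≤ 1 := by
  rw [norm_gaussWave, exp_le_one_iff, neg_nonpos]
  positivity

lemma continuous_gaussWave (w : ℝ) : Continuous (gaussWave w) := by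
  unfold gaussWave
  fun_prop

lemma integrable_gaussWave (w : ℝ) : Integrable (gaussWave w) :=
  (integrable_exp_neg_mul_sq one_pos).mono' (continuous_gaussWave w).aestronglyMeasurable
    (.of_forall fun x => by simp [norm_gaussWave])

lemma gaussWave_apply_zero (w : ℝ) : gaussWave w 0 = 1 := by
  simp [gaussWave]

lemma gaussWave_apply_neg (w x : ℝ) : gaussWave w (-x) = gaussWave (-w) x := by
  rw [gaussWave, gaussWave, ofReal_neg, neg_sq, neg_mul, mul_neg]

lemma tendsto_integral_mul_gaussWave (g : ℝ → ℂ) :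
    Tendsto (fun w => ∫ y, g y * gaussWave w y) (cocompact ℝ) (𝓝 0) := by
  refine (Real.tendsto_integral_exp_smul_cocompact fun y => cexp (-(y : ℂ) ^ 2) * g y).congr
    fun w => integral_congr_ae (.of_forall fun y => ?_)
  simp only [gaussWave, Circle.smul_def, smul_eq_mul]
  ring

lemma tendsto_HFconv_gaussWave_apply_zero {g : ℝ → ℂ} (hg : Integrable g) :
    Tendsto (fun w => HFconv (gaussWave w) g 0) (cocompact ℝ) (𝓝 0) := by
  have hint (w : ℝ) : Integrable fun y => g y * gaussWave w y :=
    hg.mul_bdd (continuous_gaussWave w).aestronglyMeasurable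
      (.of_forall (norm_gaussWave_le_one w))
  have hsplit (w : ℝ) : HFconv (gaussWave w) g 0 = (1 / (2 * Real.sqrt (2 * Real.pi))) *
      ((1 - I) * (∫ y, g y * gaussWave w y) + (1 + I) * ∫ y, g y * gaussWave (-w) y) := by
    rw [HFconv_apply_zero, ← integral_const_mul (1 - I) (fun y => g y * gaussWave w y),
      ← integral_const_mul (1 + I) (fun y => g y * gaussWave (-w) y),
      ← integral_add ((hint w).const_mul _) ((hint (-w)).const_mul _)]
    congr 2 with y
    rw [gaussWave_apply_neg]
    ring
  have hΦ := tendsto_integral_mul_gaussWave g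
  have hΦneg := hΦ.comp (Homeomorph.neg ℝ).map_cocompact.le
  simpa [hsplit] using ((hΦ.const_mul (1 - I)).add (hΦneg.const_mul (1 + I))).const_mul
    (1 / (2 * Real.sqrt (2 * Real.pi)) : ℂ)

theorem stmt17 :
    ¬ ∃ U : ℝ → ℂ, Integrable U ∧
      ∀ f : ℝ → ℂ, Integrable f → HFconv f U =ᶠ[ae volume] f := by
  rintro ⟨U, hU, hunit⟩
  have hone (w : ℝ) : HFconv (gaussWave w) U 0 = 1 := by
    have hcont := continuous_HFconv (continuous_gaussWave w) (norm_gaussWave_le_one w) hU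
    rw [(hcont.ae_eq_iff_eq volume (continuous_gaussWave w)).mp
      (hunit _ (integrable_gaussWave w)), gaussWave_apply_zero]
  have hlim := tendsto_HFconv_gaussWave_apply_zero hU
  simp only [hone] at hlim
  exact one_ne_zero (tendsto_nhds_unique tendsto_const_nhds hlim)
end

section
/- Suppose φ, ξ ∈ L¹(ℝ) with 1 + (H₁ φ)(y) ≠ 0 for all y ∈ ℝ, and let ℓ ∈ L¹(ℝ) satisfy (H₁ ℓ)(y) = (H₁ φ)(y)/(1 + (H₁ φ)(y)). Then f := ℓ ∗_{H₁,F} ξ is the unique L¹(ℝ) solution of the integral equation f(x) + (f ∗_{H₁} φ)(x) = (φ ∗_{H₁,F} ξ)(x), and it satisfies ‖f‖_{L¹(ℝ)} ≤ √(2/π) ‖ℓ‖_{L¹(ℝ)} ‖ξ‖_{L¹(ℝ)}. -/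
open MeasureTheory Real Complex Filter Topology

noncomputable def Hconv (f g : ℝ → ℂ) (x : ℝ) : ℂ :=
  (1 / (2 * Real.sqrt (2 * Real.pi))) *
    ∫ y : ℝ, f y * (g (x + y) + g (x - y) + g (-x + y) - g (-x - y))

/-!
The Hartley transform `H` turns both convolutions into products: `H (f ∗_{H₁} φ) = H f · H φ`
and `H (ℓ ∗_{H₁,F} ξ) = H ℓ · F ξ`. Both follow from Fubini and the shift rule
`H[f(· + y)](t) = cos(yt) H f(t) - sin(yt) H f(-t)`, since each convolution integrates `g y`
against a combination of `f(±x ± y)`. The equation therefore becomes `H f · (1 + H φ) = H φ · F ξ`,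
whose only solution is `H f = H ℓ · F ξ`. Finally `H` is injective on `L¹`: `𝓕 f` is a combination
of `H f` at `±2πw`, and `𝓕 f = 0` forces `f = 0` by duality with Schwartz functions.
The norm bound is Minkowski's integral inequality applied to the four translates in the kernel.
-/

open scoped FourierTransform ContDiff

noncomputable def cas (a : ℝ) : ℂ := ((Real.cos a + Real.sin a : ℝ) : ℂ)

theorem continuous_cas : Continuous cas := by
  unfold cas; fun_prop

theorem norm_cas_le (a : ℝ) : ‖cas a‖ ≤ 2 := by
  rw [cas, Complex.norm_real, Real.norm_eq_abs]
  have := abs_add_le (Real.cos a) (Real.sin a)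
  linarith [Real.abs_cos_le_one a, Real.abs_sin_le_one a]

theorem cas_sub (a s : ℝ) :
    cas (a - s) = Real.cos s * cas a - Real.sin s * cas (-a) := by
  simp only [cas, Real.cos_sub, Real.sin_sub, Real.cos_neg, Real.sin_neg]
  push_cast
  ring

theorem MeasureTheory.Integrable.mul_cas {α : Type*} [MeasurableSpace α] {μ : Measure α}
    {f : α → ℂ} (hf : Integrable f μ) {s : α → ℝ} (hs : Measurable s) :
    Integrable (fun x => f x * cas (s x)) μ :=
  hf.mul_bdd (continuous_cas.measurable.comp hs).aestronglyMeasurable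
    (ae_of_all _ fun x => norm_cas_le (s x))

theorem hartley_eq (f : ℝ → ℂ) (t : ℝ) :
    hartley f t = (1 / Real.sqrt (2 * Real.pi)) * ∫ x, f x * cas (x * t) := rfl

theorem hartley_congr_ae {f g : ℝ → ℂ} (h : f =ᵐ[volume] g) (t : ℝ) :
    hartley f t = hartley g t := by
  simp only [hartley_eq]
  congr 1
  exact integral_congr_ae (h.mono fun x hx => by simp only [hx])

theorem hartley_add {f g : ℝ → ℂ} (hf : Integrable f) (hg : Integrable g) (t : ℝ) :
    hartley (fun x => f x + g x) t = hartley f t + hartley g t := by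
  simp only [hartley_eq, add_mul]
  rw [integral_add (hf.mul_cas (by fun_prop)) (hg.mul_cas (by fun_prop)), mul_add]

theorem hartley_sub {f g : ℝ → ℂ} (hf : Integrable f) (hg : Integrable g) (t : ℝ) :
    hartley (fun x => f x - g x) t = hartley f t - hartley g t := by
  simp only [hartley_eq, sub_mul]
  rw [integral_sub (hf.mul_cas (by fun_prop)) (hg.mul_cas (by fun_prop)), mul_sub]

theorem hartley_const_mul (c : ℂ) (f : ℝ → ℂ) (t : ℝ) :
    hartley (fun x => c * f x) t = c * hartley f t := by
  simp only [hartley_eq, mul_assoc, integral_const_mul]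
  ring

theorem hartley_comp_neg (f : ℝ → ℂ) (t : ℝ) :
    hartley (fun x => f (-x)) t = hartley f (-t) := by
  simp only [hartley_eq]
  rw [← integral_neg_eq_self]
  simp only [neg_neg, neg_mul, mul_neg]

theorem hartley_comp_add_right {f : ℝ → ℂ} (hf : Integrable f) (y t : ℝ) :
    hartley (fun x => f (x + y)) t =
      Real.cos (y * t) * hartley f t - Real.sin (y * t) * hartley f (-t) := by
  have hshift : ∫ x, f (x + y) * cas (x * t) = ∫ u, f u * cas ((u - y) * t) := by
    simpa using integral_add_right_eq_self (μ := volume) (fun u => f u * cas ((u - y) * t)) y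
  have hcas : ∀ u, f u * cas ((u - y) * t) =
      Real.cos (y * t) * (f u * cas (u * t)) - Real.sin (y * t) * (f u * cas (u * -t)) := by
    intro u
    rw [sub_mul, cas_sub, mul_neg]
    ring
  simp only [hartley_eq]
  rw [hshift, integral_congr_ae (ae_of_all _ hcas),
    integral_sub ((hf.mul_cas (by fun_prop)).const_mul _) ((hf.mul_cas (by fun_prop)).const_mul _),
    integral_const_mul, integral_const_mul]
  ring

theorem hartley_comp_sub_right {f : ℝ → ℂ} (hf : Integrable f) (y t : ℝ) :
    hartley (fun x => f (x - y)) t =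
      Real.cos (y * t) * hartley f t + Real.sin (y * t) * hartley f (-t) := by
  simp only [sub_eq_add_neg, hartley_comp_add_right hf, neg_mul, Real.cos_neg, Real.sin_neg]
  push_cast
  ring

def shiftReflectComb (a b c d : ℂ) (f : ℝ → ℂ) (x y : ℝ) : ℂ :=
  a * f (x + y) + b * f (x - y) + c * f (-x - y) + d * f (-x + y)

section ShiftReflectComb

variable {f g : ℝ → ℂ} (a b c d : ℂ)

theorem shiftReflectComb_eq (x y : ℝ) :
    shiftReflectComb a b c d f x y =
      a * f (x + y) + b * f (x - y) + c * f (-(x + y)) + d * f (-(x - y)) := by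
  rw [shiftReflectComb, neg_add', neg_sub', sub_neg_eq_add]

theorem hartley_shiftReflectComb (hf : Integrable f) (y t : ℝ) :
    hartley (fun x => shiftReflectComb a b c d f x y) t =
      ((a + b) * Real.cos (y * t) + (d - c) * Real.sin (y * t)) * hartley f t +
        ((c + d) * Real.cos (y * t) + (b - a) * Real.sin (y * t)) * hartley f (-t) := by
  have hf' : Integrable (fun x => f (-x)) := hf.comp_neg
  have h₁ := (hf.comp_add_right y).const_mul a
  have h₂ := (hf.comp_sub_right y).const_mul b
  have h₃ := (hf'.comp_add_right y).const_mul c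
  have h₄ := (hf'.comp_sub_right y).const_mul d
  simp only [shiftReflectComb_eq]
  rw [hartley_add, hartley_add, hartley_add,
    hartley_const_mul, hartley_const_mul, hartley_const_mul, hartley_const_mul,
    hartley_comp_add_right hf, hartley_comp_sub_right hf, hartley_comp_add_right hf',
    hartley_comp_sub_right hf', hartley_comp_neg, hartley_comp_neg, neg_neg]
  · ring
  all_goals fun_prop

theorem integral_norm_shiftReflectComb_le (hf : Integrable f) (y : ℝ) :
    ∫ x, ‖shiftReflectComb a b c d f x y‖ ≤ (‖a‖ + ‖b‖ + ‖c‖ + ‖d‖) * ∫ x, ‖f x‖ := by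
  have hf' : Integrable (fun x => ‖f (-x)‖) := hf.norm.comp_neg
  have h₁ := (hf.norm.comp_add_right y).const_mul ‖a‖
  have h₂ := (hf.norm.comp_sub_right y).const_mul ‖b‖
  have h₃ := (hf'.comp_add_right y).const_mul ‖c‖
  have h₄ := (hf'.comp_sub_right y).const_mul ‖d‖
  have hpt : ∀ x, ‖shiftReflectComb a b c d f x y‖ ≤ ‖a‖ * ‖f (x + y)‖ + ‖b‖ * ‖f (x - y)‖ +
      ‖c‖ * ‖f (-(x + y))‖ + ‖d‖ * ‖f (-(x - y))‖ := fun x => by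
    rw [shiftReflectComb_eq, ← norm_mul, ← norm_mul, ← norm_mul, ← norm_mul]
    exact norm_add₄_le
  calc ∫ x, ‖shiftReflectComb a b c d f x y‖
      ≤ ∫ x, (‖a‖ * ‖f (x + y)‖ + ‖b‖ * ‖f (x - y)‖ +
          ‖c‖ * ‖f (-(x + y))‖ + ‖d‖ * ‖f (-(x - y))‖) :=
        integral_mono_of_nonneg (ae_of_all _ fun _ => norm_nonneg _)
          (((h₁.add h₂).add h₃).add h₄) (ae_of_all _ hpt)
    _ = (‖a‖ + ‖b‖ + ‖c‖ + ‖d‖) * ∫ x, ‖f x‖ := by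
        rw [integral_add, integral_add, integral_add, integral_const_mul, integral_const_mul,
          integral_const_mul, integral_const_mul,
          integral_add_right_eq_self (fun x => ‖f x‖), integral_sub_right_eq_self (fun x => ‖f x‖),
          integral_add_right_eq_self (fun x => ‖f (-x)‖),
          integral_sub_right_eq_self (fun x => ‖f (-x)‖), integral_neg_eq_self (fun x => ‖f x‖)]
        · ring
        all_goals fun_prop

theorem integrable_prod_mul_comp_add (hf : Integrable f) (hg : Integrable g) :
    Integrable (fun p : ℝ × ℝ => g p.2 * f (p.1 + p.2)) (volume.prod volume) := by
  have h : Integrable (fun p : ℝ × ℝ => g p.2 * f p.1) (volume.prod volume) := by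
    simpa only [mul_comm] using hf.mul_prod hg
  exact ((measurePreserving_add_prod volume volume).integrable_comp h.aestronglyMeasurable).mpr h

theorem integrable_prod_mul_comp_sub (hf : Integrable f) (hg : Integrable g) :
    Integrable (fun p : ℝ × ℝ => g p.2 * f (p.1 - p.2)) (volume.prod volume) := by
  have h : Integrable (fun p : ℝ × ℝ => g p.2 * f p.1) (volume.prod volume) := by
    simpa only [mul_comm] using hf.mul_prod hg
  exact ((measurePreserving_sub_prod volume volume).integrable_comp h.aestronglyMeasurable).mpr h

theorem integrable_prod_mul_shiftReflectComb (hf : Integrable f) (hg : Integrable g) :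
    Integrable (fun p : ℝ × ℝ => g p.2 * shiftReflectComb a b c d f p.1 p.2)
      (volume.prod volume) := by
  have hf' : Integrable (fun x => f (-x)) := hf.comp_neg
  have h₁ := (integrable_prod_mul_comp_add hf hg).const_mul a
  have h₂ := (integrable_prod_mul_comp_sub hf hg).const_mul b
  have h₃ := (integrable_prod_mul_comp_add hf' hg).const_mul c
  have h₄ := (integrable_prod_mul_comp_sub hf' hg).const_mul d
  refine (((h₁.add h₂).add h₃).add h₄).congr (ae_of_all _ fun p => ?_)
  simp only [Pi.add_apply, shiftReflectComb_eq]
  ring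

end ShiftReflectComb

section KernelIntegral

variable {g : ℝ → ℂ} {k : ℝ → ℝ → ℂ}

theorem hartley_integral_mul
    (hk : Integrable (fun p : ℝ × ℝ => g p.2 * k p.1 p.2) (volume.prod volume)) (t : ℝ) :
    hartley (fun x => ∫ y, g y * k x y) t = ∫ y, g y * hartley (fun x => k x y) t := by
  have hkt : Integrable (fun p : ℝ × ℝ => g p.2 * k p.1 p.2 * cas (p.1 * t))
      (volume.prod volume) := hk.mul_cas (by fun_prop)
  simp only [hartley_eq, ← integral_mul_const]
  rw [integral_integral_swap hkt, ← integral_const_mul]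
  refine integral_congr_ae (ae_of_all _ fun y => ?_)
  simp only [← integral_const_mul]
  exact integral_congr_ae (ae_of_all _ fun x => by ring)

theorem integral_norm_integral_mul_le (hg : Integrable g)
    (hk : Integrable (fun p : ℝ × ℝ => g p.2 * k p.1 p.2) (volume.prod volume)) {M : ℝ}
    (hM : ∀ y, ∫ x, ‖k x y‖ ≤ M) :
    ∫ x, ‖∫ y, g y * k x y‖ ≤ M * ∫ y, ‖g y‖ :=
  calc ∫ x, ‖∫ y, g y * k x y‖
      ≤ ∫ x, ∫ y, ‖g y * k x y‖ :=
        integral_mono hk.integral_prod_left.norm hk.norm.integral_prod_left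
          fun x => norm_integral_le_integral_norm _
    _ = ∫ y, ‖g y‖ * ∫ x, ‖k x y‖ := by
        rw [integral_integral_swap hk.norm]
        simp only [norm_mul, integral_const_mul]
    _ ≤ ∫ y, ‖g y‖ * M :=
        integral_mono_of_nonneg (ae_of_all _ fun y => by positivity) (hg.norm.mul_const M)
          (ae_of_all _ fun y => mul_le_mul_of_nonneg_left (hM y) (norm_nonneg _))
    _ = M * ∫ y, ‖g y‖ := by rw [integral_mul_const, mul_comm]

end KernelIntegral

-- The paper's Fourier transform `F`; Mathlib's `𝓕` uses the kernel `e^{-2πixw}` instead.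
noncomputable def fourierAngular (g : ℝ → ℂ) (t : ℝ) : ℂ :=
  (1 / Real.sqrt (2 * Real.pi)) * ∫ y, g y * Complex.exp (-(y * t) * Complex.I)

section Convolutions

variable {f g : ℝ → ℂ}

theorem HFconv_eq_integral_shiftReflectComb (f g : ℝ → ℂ) :
    HFconv f g = fun x => (1 / (2 * Real.sqrt (2 * Real.pi))) *
      ∫ y, g y * shiftReflectComb 1 1 Complex.I (-Complex.I) f x y := by
  funext x
  simp only [HFconv, shiftReflectComb]
  congr 2 with y
  ring

theorem Hconv_eq_integral_shiftReflectComb (f g : ℝ → ℂ) :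
    Hconv f g = fun x => (1 / (2 * Real.sqrt (2 * Real.pi))) *
      ∫ y, f y * shiftReflectComb 1 1 (-1) 1 g x y := by
  funext x
  simp only [Hconv, shiftReflectComb]
  congr 2 with y
  ring

theorem integrable_HFconv (hf : Integrable f) (hg : Integrable g) : Integrable (HFconv f g) := by
  rw [HFconv_eq_integral_shiftReflectComb]
  exact (integrable_prod_mul_shiftReflectComb _ _ _ _ hf hg).integral_prod_left.const_mul _

theorem integrable_Hconv (hf : Integrable f) (hg : Integrable g) : Integrable (Hconv f g) := by
  rw [Hconv_eq_integral_shiftReflectComb]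
  exact (integrable_prod_mul_shiftReflectComb _ _ _ _ hg hf).integral_prod_left.const_mul _

theorem hartley_HFconv (hf : Integrable f) (hg : Integrable g) (t : ℝ) :
    hartley (HFconv f g) t = hartley f t * fourierAngular g t := by
  have hkernel : ∀ y : ℝ,
      g y * hartley (fun x => shiftReflectComb 1 1 Complex.I (-Complex.I) f x y) t =
        (2 * hartley f t) * (g y * Complex.exp (-(y * t) * Complex.I)) := fun y => by
    rw [hartley_shiftReflectComb _ _ _ _ hf, Complex.exp_mul_I, ← Complex.ofReal_mul,
      ← Complex.ofReal_neg, ← Complex.ofReal_cos, ← Complex.ofReal_sin, Real.cos_neg, Real.sin_neg]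
    push_cast
    ring
  rw [HFconv_eq_integral_shiftReflectComb, hartley_const_mul,
    hartley_integral_mul (integrable_prod_mul_shiftReflectComb _ _ _ _ hf hg),
    integral_congr_ae (ae_of_all _ hkernel), integral_const_mul, fourierAngular]
  ring

theorem hartley_Hconv (hf : Integrable f) (hg : Integrable g) (t : ℝ) :
    hartley (Hconv f g) t = hartley f t * hartley g t := by
  have hkernel : ∀ y : ℝ, f y * hartley (fun x => shiftReflectComb 1 1 (-1) 1 g x y) t
      = 2 * hartley g t * (f y * cas (y * t)) := fun y => by
    rw [hartley_shiftReflectComb _ _ _ _ hg, cas]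
    push_cast
    ring
  rw [Hconv_eq_integral_shiftReflectComb, hartley_const_mul,
    hartley_integral_mul (integrable_prod_mul_shiftReflectComb _ _ _ _ hg hf),
    integral_congr_ae (ae_of_all _ hkernel), integral_const_mul, hartley_eq f]
  ring

theorem integral_norm_HFconv_le (hf : Integrable f) (hg : Integrable g) :
    ∫ x, ‖HFconv f g x‖ ≤ Real.sqrt (2 / Real.pi) * (∫ x, ‖f x‖) * (∫ x, ‖g x‖) := by
  have hcoeff : ‖(1 : ℂ)‖ + ‖(1 : ℂ)‖ + ‖Complex.I‖ + ‖-Complex.I‖ = 4 := by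
    norm_num [Complex.norm_I]
  have hconst : ‖(1 / (2 * Real.sqrt (2 * Real.pi)) : ℂ)‖ * 4 = Real.sqrt (2 / Real.pi) := by
    have hpos : 0 < Real.sqrt (2 * Real.pi) := by positivity
    have hprod : Real.sqrt (2 * Real.pi) * Real.sqrt (2 / Real.pi) = 2 := by
      rw [← Real.sqrt_mul (by positivity),
        show 2 * Real.pi * (2 / Real.pi) = 2 ^ 2 by field_simp]
      exact Real.sqrt_sq zero_le_two
    rw [norm_div, norm_one, norm_mul, Complex.norm_real, Real.norm_of_nonneg hpos.le,
      Complex.norm_two]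
    field_simp
    linarith
  have hbound := integral_norm_integral_mul_le hg
    (integrable_prod_mul_shiftReflectComb _ _ _ _ hf hg)
    (integral_norm_shiftReflectComb_le 1 1 Complex.I (-Complex.I) hf)
  rw [hcoeff] at hbound
  rw [HFconv_eq_integral_shiftReflectComb, ← hconst]
  simp only [norm_mul, integral_const_mul]
  exact (mul_le_mul_of_nonneg_left hbound (norm_nonneg _)).trans_eq (by ring)

end Convolutions

theorem ae_eq_zero_of_fourier_eq_zero {V E : Type*} [NormedAddCommGroup V]
    [InnerProductSpace ℝ V] [FiniteDimensional ℝ V] [MeasurableSpace V] [BorelSpace V]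
    [NormedAddCommGroup E] [NormedSpace ℂ E] [CompleteSpace E] {f : V → E}
    (hf : Integrable f) (h : ∀ w, 𝓕 f w = 0) : f =ᵐ[volume] 0 := by
  refine ae_eq_zero_of_integral_contDiff_smul_eq_zero hf.locallyIntegrable fun g hg hgs => ?_
  have hG : ContDiff ℝ ∞ (fun x => (g x : ℂ)) := Complex.ofRealCLM.contDiff.comp hg
  let G : SchwartzMap V ℂ := (hgs.comp_left Complex.ofReal_zero).toSchwartzMap hG
  let ψ : SchwartzMap V ℂ := 𝓕⁻ G
  have hψ : ∀ x, 𝓕 (ψ : V → ℂ) x = g x := fun x => by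
    rw [← SchwartzMap.fourier_coe, FourierTransform.fourier_fourierInv_eq]
    rfl
  calc ∫ x, g x • f x = ∫ x, 𝓕 (ψ : V → ℂ) x • f x := by
        simp only [hψ, Complex.coe_smul]
    _ = ∫ x, ψ x • 𝓕 f x := by
        have := VectorFourier.integral_fourierIntegral_smul_eq_flip (L := innerₗ V)
          (μ := volume) (ν := volume) Real.continuous_fourierChar
          (by simpa using continuous_inner) ψ.integrable hf
        rwa [flip_innerₗ] at this
    _ = 0 := by simp [h]

theorem fourier_eq_hartley {f : ℝ → ℂ} (hf : Integrable f) (w : ℝ) :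
    𝓕 f w = Real.sqrt (2 * Real.pi) * ((1 - Complex.I) / 2 * hartley f (2 * Real.pi * w) +
      (1 + Complex.I) / 2 * hartley f (-(2 * Real.pi * w))) := by
  have hpt : ∀ v : ℝ, Complex.exp ((-2 * Real.pi * v * w : ℝ) * Complex.I) • f v =
      (1 - Complex.I) / 2 * (f v * cas (v * (2 * Real.pi * w))) +
        (1 + Complex.I) / 2 * (f v * cas (v * -(2 * Real.pi * w))) := fun v => by
    rw [smul_eq_mul, Complex.exp_mul_I, cas, cas]
    push_cast
    rw [show -2 * (Real.pi : ℂ) * v * w = -(v * (2 * Real.pi * w)) by ring, mul_neg,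
      Complex.cos_neg, Complex.sin_neg]
    ring
  have hpos : (Real.sqrt (2 * Real.pi) : ℂ) ≠ 0 := by
    exact_mod_cast (Real.sqrt_pos.mpr (by positivity)).ne'
  rw [Real.fourier_real_eq_integral_exp_smul, integral_congr_ae (ae_of_all _ hpt),
    integral_add ((hf.mul_cas (by fun_prop)).const_mul _) ((hf.mul_cas (by fun_prop)).const_mul _),
    integral_const_mul, integral_const_mul, hartley_eq, hartley_eq]
  linear_combination (-((1 - Complex.I) / 2 * ∫ x, f x * cas (x * (2 * Real.pi * w))) -
    (1 + Complex.I) / 2 * ∫ x, f x * cas (x * -(2 * Real.pi * w))) * mul_one_div_cancel hpos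

theorem hartley_injective {f g : ℝ → ℂ} (hf : Integrable f) (hg : Integrable g)
    (h : ∀ t, hartley f t = hartley g t) : f =ᵐ[volume] g := by
  have hsub : ∀ t, hartley (fun x => f x - g x) t = 0 := fun t => by
    rw [hartley_sub hf hg, h, sub_self]
  have hzero := ae_eq_zero_of_fourier_eq_zero (f := fun x => f x - g x) (hf.sub hg) fun w => by
    rw [fourier_eq_hartley (f := fun x => f x - g x) (hf.sub hg), hsub, hsub]
    simp
  filter_upwards [hzero] with x hx
  exact sub_eq_zero.mp hx

theorem stmt18 (φ ξ ℓ : ℝ → ℂ)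
    (hφ : Integrable φ) (hξ : Integrable ξ) (hℓ : Integrable ℓ)
    (hne : ∀ y : ℝ, 1 + hartley φ y ≠ 0)
    (hℓeq : ∀ y : ℝ, hartley ℓ y = hartley φ y / (1 + hartley φ y)) :
    Integrable (HFconv ℓ ξ) ∧
      (∀ᵐ x : ℝ ∂volume, HFconv ℓ ξ x + Hconv (HFconv ℓ ξ) φ x = HFconv φ ξ x) ∧
      (∀ f : ℝ → ℂ, Integrable f →
        (∀ᵐ x : ℝ ∂volume, f x + Hconv f φ x = HFconv φ ξ x) →
        f =ᶠ[ae volume] HFconv ℓ ξ) ∧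
      ∫ x : ℝ, ‖HFconv ℓ ξ x‖ ≤
        Real.sqrt (2 / Real.pi) * (∫ x : ℝ, ‖ℓ x‖) * (∫ x : ℝ, ‖ξ x‖) := by
  have hsol := integrable_HFconv hℓ hξ
  have hlhs : ∀ f, Integrable f → ∀ t,
      hartley (fun x => f x + Hconv f φ x) t = hartley f t * (1 + hartley φ t) := by
    intro f hf t
    rw [hartley_add hf (integrable_Hconv hf hφ), hartley_Hconv hf hφ]
    ring
  have hsolves : ∀ᵐ x, HFconv ℓ ξ x + Hconv (HFconv ℓ ξ) φ x = HFconv φ ξ x := by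
    refine hartley_injective (hsol.add (integrable_Hconv hsol hφ)) (integrable_HFconv hφ hξ)
      fun t => ?_
    rw [hlhs _ hsol, hartley_HFconv hℓ hξ, hartley_HFconv hφ hξ, hℓeq]
    field_simp [hne t]
  refine ⟨hsol, hsolves, fun f hf hfeq => hartley_injective hf hsol fun t => ?_,
    integral_norm_HFconv_le hℓ hξ⟩
  refine mul_right_cancel₀ (hne t) ?_
  rw [← hlhs f hf, ← hlhs _ hsol, hartley_congr_ae hfeq, hartley_congr_ae hsolves]
end
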